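/- arXiv:0906.2261 — 5 statements merged into one kernel-verified Lean document; each statement's English description precedes it below -/
import Mathlib

section
/- Every connected claw-free graph with an even number of vertices has a perfect matching. -/
/-- A graph is claw-free if it has no induced subgraph isomorphic to `K_{1,3}`. -/
def ClawFree {V : Type*} (G : SimpleGraph V) : Prop :=
  ¬ ∃ v a b c : V, a ≠ b ∧ a ≠ c ∧ b ≠ c ∧
      G.Adj v a ∧ G.Adj v b ∧ G.Adj v c ∧ ¬ G.Adj a b ∧ ¬ G.Adj a c ∧ ¬ G.Adj b c

open SimpleGraph


-- predecessor lemma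
lemma exists_pred {V : Type*} (G : SimpleGraph V) (hconn : G.Connected) (r z : V) (hz : z ≠ r) :
    ∃ y, G.Adj y z ∧ G.dist r y + 1 = G.dist r z := by
  obtain ⟨q, hq⟩ := (hconn z r).exists_walk_length_eq_dist
  cases q with
  | nil => exact absurd rfl hz
  | @cons _ y _ h q' =>
    refine ⟨y, h.symm, ?_⟩
    have h1 : G.dist r y ≤ q'.length := by
      have := SimpleGraph.dist_le q'.reverse
      simpa using this
    have h2 : q'.length + 1 = G.dist r z := by
      have : (SimpleGraph.Walk.cons h q').length = G.dist z r := hq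
      simp [SimpleGraph.Walk.length_cons] at this
      rw [SimpleGraph.dist_comm] at this
      omega
    have h3 : G.dist r z ≤ G.dist r y + 1 := by
      have ht := hconn.dist_triangle (u := r) (v := y) (w := z)
      have : G.dist y z ≤ 1 := by
        have := SimpleGraph.dist_le h.symm.toWalk
        simpa using this
      omega
    omega

lemma reach_aux {V : Type*} (G : SimpleGraph V) {r a b : V}
    (hra : r ≠ a) (hrb : r ≠ b)
    (step : ∀ z, z ≠ a → z ≠ b → z ≠ r →
      ∃ y, y ≠ a ∧ y ≠ b ∧ G.Adj y z ∧ G.dist r y < G.dist r z) :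
    (((⊤ : G.Subgraph).induce {a, b}ᶜ).coe).Preconnected := by
  set H := ((⊤ : G.Subgraph).induce {a, b}ᶜ) with hH
  have hrmem : r ∈ ({a, b}ᶜ : Set V) := by simp [hra, hrb]
  have main : ∀ (n : ℕ) (z : V) (hz : z ∈ ({a, b}ᶜ : Set V)), G.dist r z = n →
      H.coe.Reachable ⟨z, hz⟩ ⟨r, hrmem⟩ := by
    intro n
    induction n using Nat.strong_induction_on with
    | _ n ih =>
      intro z hz hdist
      by_cases hzr : z = r
      · subst hzr; rfl
      · have hz' : ¬(z = a ∨ z = b) := by simpa [Set.mem_insert_iff] using hz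
        push_neg at hz'
        obtain ⟨y, hya, hyb, hadj, hlt⟩ := step z hz'.1 hz'.2 hzr
        have hymem : y ∈ ({a, b}ᶜ : Set V) := by simp [hya, hyb]
        have hrec := ih (G.dist r y) (hdist ▸ hlt) y hymem rfl
        have hadj' : H.coe.Adj ⟨z, hz⟩ ⟨y, hymem⟩ := by
          simp only [hH, SimpleGraph.Subgraph.coe_adj, SimpleGraph.Subgraph.induce_adj,
            SimpleGraph.Subgraph.top_adj]
          exact ⟨hz, hymem, hadj.symm⟩
        exact hadj'.reachable.trans hrec
  intro x y
  exact (main _ x.1 x.2 rfl).trans (main _ y.1 y.2 rfl).symm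

lemma compl_pair_subsingleton {V : Type*} [Fintype V] {u w : V} (h : u ≠ w)
    (h3 : Fintype.card V ≤ 3) : Subsingleton ↥({u, w}ᶜ : Set V) := by
  constructor
  rintro ⟨x, hx⟩ ⟨z, hz⟩
  simp only [Set.mem_compl_iff, Set.mem_insert_iff, Set.mem_singleton_iff, not_or] at hx hz
  by_contra hxz
  have hxz' : x ≠ z := by simpa [Subtype.ext_iff] using hxz
  have hinj : Function.Injective ![u, w, x, z] := by
    intro i j hij
    fin_cases i <;> fin_cases j <;>
      simp_all [Matrix.cons_val_zero, Matrix.cons_val_one]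
  have := Fintype.card_le_of_injective _ hinj
  simp [Fintype.card_fin] at this
  omega

lemma key_lemma {V : Type*} [Fintype V] (G : SimpleGraph V) (hconn : G.Connected)
    (hclaw : ClawFree G) (h2 : 2 ≤ Fintype.card V) :
    ∃ u w, G.Adj u w ∧ (((⊤ : G.Subgraph).induce {u, w}ᶜ).coe).Preconnected := by
  classical
  have hne : Nonempty V := Fintype.card_pos_iff.mp (by omega)
  obtain ⟨r⟩ := hne
  obtain ⟨u, -, hu⟩ := Finset.exists_max_image Finset.univ (G.dist r) ⟨r, Finset.mem_univ r⟩
  have hu' : ∀ v, G.dist r v ≤ G.dist r u := fun v => hu v (Finset.mem_univ v)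
  set d := G.dist r u with hd
  have hd1 : 1 ≤ d := by
    obtain ⟨v, hv⟩ := Fintype.exists_ne_of_one_lt_card (by omega) r
    have := hconn.pos_dist_of_ne (u := r) (v := v) (Ne.symm hv)
    have := hu' v
    omega
  have hur : u ≠ r := by
    intro h
    rw [h] at hd
    rw [SimpleGraph.dist_self] at hd
    omega
  by_cases hsmall : Fintype.card V ≤ 3
  · obtain ⟨y, hadj, hydist⟩ := exists_pred G hconn r u hur
    refine ⟨u, y, hadj.symm, ?_⟩
    have hss := compl_pair_subsingleton (u := u) (w := y) hadj.symm.ne hsmall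
    intro x z
    have hxz : x = z := Subsingleton.elim (α := ({u, y}ᶜ : Set V)) x z
    rw [hxz]
  · -- card ≥ 4
    push_neg at hsmall
    by_cases hA : ∃ a b, G.Adj a b ∧ G.dist r a = d ∧ G.dist r b = d
    · -- two adjacent vertices at maximal distance
      obtain ⟨a, b, hab, hda, hdb⟩ := hA
      have hra : r ≠ a := by
        intro h; rw [← h] at hda; rw [SimpleGraph.dist_self] at hda; omega
      have hrb : r ≠ b := by
        intro h; rw [← h] at hdb; rw [SimpleGraph.dist_self] at hdb; omega
      refine ⟨a, b, hab, reach_aux G hra hrb ?_⟩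
      intro z hza hzb hzr
      obtain ⟨y, hadj, hydist⟩ := exists_pred G hconn r z hzr
      refine ⟨y, ?_, ?_, hadj, by omega⟩
      · intro h; rw [h, hda] at hydist; have := hu' z; omega
      · intro h; rw [h, hdb] at hydist; have := hu' z; omega
    · -- no two max-distance vertices are adjacent
      push_neg at hA
      -- predecessor w of u
      obtain ⟨w, hwu, hwdist⟩ := exists_pred G hconn r u hur
      have hd2 : 2 ≤ d := by
        -- if d = 1 then G is a star with ≥ 4 vertices: a claw
        by_contra hx
        have hdeq : d = 1 := by omega
        -- every vertex other than r is adjacent to r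
        have hstar : ∀ v : V, v ≠ r → G.Adj r v ∧ G.dist r v = 1 := by
          intro v hv
          obtain ⟨y, hadj, hydist⟩ := exists_pred G hconn r v hv
          have hv1 : G.dist r v = 1 := by
            have := hu' v
            have := hconn.pos_dist_of_ne (Ne.symm hv)
            omega
          have hy0 : G.dist r y = 0 := by omega
          have hyr : r = y := hconn.dist_eq_zero_iff.mp hy0
          exact ⟨hyr ▸ hadj, hv1⟩
        -- get three distinct vertices ≠ r, pairwise nonadjacent: a claw at r
        have hcard3 : 3 ≤ (Finset.univ.erase r).card := by
          rw [Finset.card_erase_of_mem (Finset.mem_univ r), Finset.card_univ]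
          omega
        obtain ⟨a, ha⟩ := Finset.card_pos.mp (by omega : 0 < (Finset.univ.erase r).card)
        obtain ⟨b, hb, hba⟩ := Finset.exists_mem_ne (s := Finset.univ.erase r) (by omega) a
        have hlt : 1 < ((Finset.univ.erase r).erase a).card := by
          rw [Finset.card_erase_of_mem ha]; omega
        obtain ⟨c, hc, hcb⟩ := Finset.exists_mem_ne hlt b
        have hca : c ≠ a := (Finset.mem_erase.mp hc).1
        have hc' : c ∈ Finset.univ.erase r := (Finset.mem_erase.mp hc).2
        have har : a ≠ r := (Finset.mem_erase.mp ha).1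
        have hbr : b ≠ r := (Finset.mem_erase.mp hb).1
        have hcr : c ≠ r := (Finset.mem_erase.mp hc').1
        have hsa := hstar a har
        have hsb := hstar b hbr
        have hsc := hstar c hcr
        have hnadj : ∀ x y : V, x ≠ r → y ≠ r → ¬G.Adj x y := by
          intro x y hxr hyr hxy
          exact hA x y hxy (by rw [(hstar x hxr).2]; omega) (by rw [(hstar y hyr).2]; omega)
        exact hclaw ⟨r, a, b, c, hba.symm, hca.symm, hcb.symm, hsa.1, hsb.1, hsc.1,
          hnadj a b har hbr, hnadj a c har hcr, hnadj b c hbr hcr⟩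
      -- main case: d ≥ 2; remove u and its predecessor w
      have hwd : G.dist r w = d - 1 := by omega
      have hrw : r ≠ w := by
        intro h; rw [← h, SimpleGraph.dist_self] at hwd; omega
      obtain ⟨p, hpw, hpdist⟩ := exists_pred G hconn r w (Ne.symm hrw)
      have hpd : G.dist r p = d - 2 := by omega
      refine ⟨u, w, hwu.symm, reach_aux G hur.symm hrw ?_⟩
      intro z hzu hzw hzr
      obtain ⟨y, hadj, hydist⟩ := exists_pred G hconn r z hzr
      by_cases hyu : y = u
      · exfalso; rw [hyu] at hydist; have := hu' z; omega
      by_cases hyw : y = w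
      · -- z is adjacent to w at max distance; use the claw at w
        rw [hyw] at hadj hydist
        have hzd : G.dist r z = d := by omega
        have hup : ¬G.Adj u p := by
          intro h
          have ht := hconn.dist_triangle (u := r) (v := p) (w := u)
          have : G.dist p u ≤ 1 := by simpa using SimpleGraph.dist_le h.symm.toWalk
          omega
        have huz : ¬G.Adj u z := fun h => hA u z h hd.symm hzd
        have hpz : G.Adj p z := by
          by_contra hpz
          exact hclaw ⟨w, u, p, z,
            (by intro h; rw [← h] at hpd; omega),
            Ne.symm hzu,
            (by intro h; rw [h] at hpd; omega),
            hwu, hpw.symm, hadj, hup, huz, hpz⟩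
        refine ⟨p, ?_, ?_, hpz, by omega⟩
        · intro h; rw [h] at hpd; omega
        · intro h; rw [h] at hpd; omega
      · exact ⟨y, hyu, hyw, hadj, by omega⟩

universe u

lemma sumner_aux : ∀ (n : ℕ) (V : Type u) [Fintype V] (G : SimpleGraph V),
    Fintype.card V = n → G.Preconnected → ClawFree G → Even n →
    ∃ M : G.Subgraph, M.IsPerfectMatching := by
  intro n
  induction n using Nat.strong_induction_on with
  | _ n ih =>
    intro V _ G hcard hpre hclaw heven
    by_cases h0 : n = 0
    · subst h0
      have hempty : IsEmpty V := Fintype.card_eq_zero_iff.mp hcard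
      refine ⟨⊥, ⟨?_, ?_⟩⟩
      · intro v hv; exact absurd hv (by simp)
      · intro v; exact (hempty.false v).elim
    · have h2 : 2 ≤ n := by
        rcases heven with ⟨k, hk⟩; omega
      have hne : Nonempty V := Fintype.card_pos_iff.mp (by omega)
      have hconn : G.Connected := by rw [SimpleGraph.connected_iff]; exact ⟨hpre, hne⟩
      obtain ⟨u, w, huw, hpre'⟩ := key_lemma G hconn hclaw (by omega)
      classical
      set s : Set V := {u, w}ᶜ with hs
      set H : G.Subgraph := (⊤ : G.Subgraph).induce s with hH
      have hcards : Fintype.card ↥s = n - 2 := by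
        have h1 : Nat.card ↥s = s.ncard := Nat.card_coe_set_eq s
        have h2' := Set.ncard_add_ncard_compl ({u, w} : Set V)
        rw [Set.ncard_pair huw.ne, Nat.card_eq_fintype_card, hcard] at h2'
        have h3 : s.ncard = ({u, w}ᶜ : Set V).ncard := rfl
        rw [← Nat.card_eq_fintype_card, h1, h3]
        omega
      have hclaw' : ClawFree H.coe := by
        rintro ⟨v, a, b, c, hab, hac, hbc, hva, hvb, hvc, nab, nac, nbc⟩
        have adj : ∀ x y : ↥H.verts, H.coe.Adj x y → G.Adj ↑x ↑y := by
          intro x y hxy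
          rw [SimpleGraph.Subgraph.coe_adj] at hxy
          exact hxy.adj_sub
        have nadj : ∀ x y : ↥H.verts, ¬H.coe.Adj x y → ¬G.Adj ↑x ↑y := by
          intro x y hxy hG
          exact hxy (by
            simp only [hH, SimpleGraph.Subgraph.coe_adj, SimpleGraph.Subgraph.induce_adj,
              SimpleGraph.Subgraph.top_adj]
            exact ⟨x.2, y.2, hG⟩)
        exact hclaw ⟨↑v, ↑a, ↑b, ↑c,
          Subtype.coe_injective.ne hab, Subtype.coe_injective.ne hac,
          Subtype.coe_injective.ne hbc,
          adj _ _ hva, adj _ _ hvb, adj _ _ hvc,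
          nadj _ _ nab, nadj _ _ nac, nadj _ _ nbc⟩
      have hevens : Even (n - 2) := by
        rcases heven with ⟨k, hk⟩; exact ⟨k - 1, by omega⟩
      obtain ⟨M', hM'⟩ := ih (n - 2) (by omega) ↥s H.coe hcards hpre' hclaw' hevens
      have hMverts : ((SimpleGraph.Subgraph.coeSubgraph M')).verts = s := by
        show Subtype.val '' M'.verts = s
        rw [Set.eq_univ_of_forall hM'.2]
        exact Subtype.coe_image_univ _
      refine ⟨(SimpleGraph.Subgraph.coeSubgraph M') ⊔ G.subgraphOfAdj huw, ?_, ?_⟩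
      · refine SimpleGraph.Subgraph.IsMatching.sup hM'.1.coeSubgraph
          (SimpleGraph.Subgraph.IsMatching.subgraphOfAdj huw) ?_
        rw [hM'.1.coeSubgraph.support_eq_verts, hMverts,
          (SimpleGraph.Subgraph.IsMatching.subgraphOfAdj huw).support_eq_verts,
          SimpleGraph.subgraphOfAdj_verts]
        exact disjoint_compl_left
      · intro v
        simp only [SimpleGraph.Subgraph.verts_sup, hMverts, SimpleGraph.subgraphOfAdj_verts,
          Set.mem_union]
        by_cases hv : v ∈ ({u, w} : Set V)
        · exact Or.inr hv
        · exact Or.inl hv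

/-- Sumner / Las Vergnas: every connected claw-free graph with an even number of
vertices has a perfect matching. -/
theorem connected_clawfree_even_has_perfect_matching
    {V : Type*} [Fintype V] (G : SimpleGraph V)
    (hconn : G.Connected) (hclaw : ClawFree G) (heven : Even (Fintype.card V)) :
    ∃ M : G.Subgraph, M.IsPerfectMatching :=
  sumner_aux (Fintype.card V) V G rfl hconn.preconnected hclaw heven
end

section
/- If a vertex of a claw-free cubic graph lies in three distinct triangles, then the connected component containing that vertex is isomorphic to K_4. -/
/-- A triangle: a set of three pairwise adjacent vertices. -/
def IsTriangle {V : Type*} (G : SimpleGraph V) (T : Finset V) : Prop :=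
  T.card = 3 ∧ ∀ a ∈ T, ∀ b ∈ T, a ≠ b → G.Adj a b

/-- The diamond: `K₄` minus an edge. -/
def diamondGraph : SimpleGraph (Fin 4) :=
  (SimpleGraph.completeGraph (Fin 4)).deleteEdges {s(0, 1)}

/-- A diamond in `G`: a vertex subset inducing a subgraph isomorphic to `K₄` minus an edge. -/
def IsDiamond {V : Type*} (G : SimpleGraph V) (s : Finset V) : Prop :=
  Nonempty (G.induce (↑s : Set V) ≃g diamondGraph)

/-- If a vertex of a claw-free cubic graph lies in three distinct triangles, then its
connected component is isomorphic to `K₄`. -/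
theorem component_of_vertex_in_three_triangles
    {V : Type*} [Fintype V] [DecidableEq V] (G : SimpleGraph V) [DecidableRel G.Adj]
    (hclaw : ClawFree G) (hcubic : ∀ v : V, G.degree v = 3)
    (v : V) (T₁ T₂ T₃ : Finset V)
    (h₁ : IsTriangle G T₁ ∧ v ∈ T₁) (h₂ : IsTriangle G T₂ ∧ v ∈ T₂)
    (h₃ : IsTriangle G T₃ ∧ v ∈ T₃)
    (hne : T₁ ≠ T₂ ∧ T₁ ≠ T₃ ∧ T₂ ≠ T₃) :
    Nonempty (G.induce (G.connectedComponentMk v).supp ≃g SimpleGraph.completeGraph (Fin 4)) := by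
  classical
  obtain ⟨⟨hc1, ha1⟩, hv1⟩ := h₁
  obtain ⟨⟨hc2, ha2⟩, hv2⟩ := h₂
  obtain ⟨⟨hc3, ha3⟩, hv3⟩ := h₃
  obtain ⟨hne12, hne13, hne23⟩ := hne
  set N := G.neighborFinset v with hNdef
  have hNcard : N.card = 3 := by
    rw [hNdef, G.card_neighborFinset_eq_degree, hcubic v]
  obtain ⟨a, b, c, hab, hac, hbc, hN⟩ := Finset.card_eq_three.mp hNcard
  have hva : G.Adj v a := by
    rw [← SimpleGraph.mem_neighborFinset, ← hNdef, hN]; simp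
  have hvb : G.Adj v b := by
    rw [← SimpleGraph.mem_neighborFinset, ← hNdef, hN]; simp
  have hvc : G.Adj v c := by
    rw [← SimpleGraph.mem_neighborFinset, ← hNdef, hN]; simp
  -- each triangle minus v is a 2-subset of N
  have hmem : ∀ T : Finset V, T.card = 3 →
      (∀ x ∈ T, ∀ y ∈ T, x ≠ y → G.Adj x y) → v ∈ T →
      T.erase v ∈ N.powersetCard 2 := by
    intro T hcard hadj hvT
    rw [Finset.mem_powersetCard]
    refine ⟨?_, by rw [Finset.card_erase_of_mem hvT, hcard]⟩
    intro x hx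
    rw [hNdef, SimpleGraph.mem_neighborFinset]
    exact hadj v hvT x (Finset.mem_of_mem_erase hx) (Ne.symm (Finset.ne_of_mem_erase hx))
  have hP : ({T₁.erase v, T₂.erase v, T₃.erase v} : Finset (Finset V)) =
      N.powersetCard 2 := by
    have hsub : ({T₁.erase v, T₂.erase v, T₃.erase v} : Finset (Finset V)) ⊆
        N.powersetCard 2 := by
      intro s hs
      simp only [Finset.mem_insert, Finset.mem_singleton] at hs
      rcases hs with rfl | rfl | rfl
      · exact hmem T₁ hc1 ha1 hv1
      · exact hmem T₂ hc2 ha2 hv2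
      · exact hmem T₃ hc3 ha3 hv3
    have hd12 : T₁.erase v ≠ T₂.erase v := fun h => hne12 (by
      rw [← Finset.insert_erase hv1, ← Finset.insert_erase hv2, h])
    have hd13 : T₁.erase v ≠ T₃.erase v := fun h => hne13 (by
      rw [← Finset.insert_erase hv1, ← Finset.insert_erase hv3, h])
    have hd23 : T₂.erase v ≠ T₃.erase v := fun h => hne23 (by
      rw [← Finset.insert_erase hv2, ← Finset.insert_erase hv3, h])
    have hcardP : ({T₁.erase v, T₂.erase v, T₃.erase v} : Finset (Finset V)).card = 3 := by
      rw [Finset.card_insert_of_notMem (by simp [hd12, hd13]),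
        Finset.card_insert_of_notMem (by simp [hd23]), Finset.card_singleton]
    apply Finset.eq_of_subset_of_card_le hsub
    rw [Finset.card_powersetCard, hNcard, hcardP]
    norm_num
  -- any two distinct neighbors of v are adjacent
  have adjpair : ∀ x y : V, x ≠ y → x ∈ N → y ∈ N → G.Adj x y := by
    intro x y hxy hxN hyN
    have hmem2 : ({x, y} : Finset V) ∈ N.powersetCard 2 := by
      rw [Finset.mem_powersetCard]
      constructor
      · intro z hz; simp only [Finset.mem_insert, Finset.mem_singleton] at hz
        rcases hz with rfl | rfl <;> assumption
      · rw [Finset.card_insert_of_notMem (by simp [hxy]), Finset.card_singleton]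
    rw [← hP] at hmem2
    simp only [Finset.mem_insert, Finset.mem_singleton] at hmem2
    have key : ∀ T : Finset V, (∀ p ∈ T, ∀ q ∈ T, p ≠ q → G.Adj p q) →
        ({x, y} : Finset V) = T.erase v → G.Adj x y := by
      intro T hadj h
      have hx : x ∈ T := Finset.mem_of_mem_erase (h ▸ (by simp : x ∈ ({x, y} : Finset V)))
      have hy : y ∈ T := Finset.mem_of_mem_erase (h ▸ (by simp : y ∈ ({x, y} : Finset V)))
      exact hadj x hx y hy hxy
    rcases hmem2 with h | h | h
    · exact key T₁ ha1 h
    · exact key T₂ ha2 h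
    · exact key T₃ ha3 h
  have habN : G.Adj a b := adjpair a b hab (by rw [hN]; simp) (by rw [hN]; simp)
  have hacN : G.Adj a c := adjpair a c hac (by rw [hN]; simp) (by rw [hN]; simp)
  have hbcN : G.Adj b c := adjpair b c hbc (by rw [hN]; simp) (by rw [hN]; simp)
  set S : Set V := {v, a, b, c} with hSdef
  -- every vertex in S has all its neighbors in S
  have nbr : ∀ x p q r : V, p ≠ q → p ≠ r → q ≠ r → G.Adj x p → G.Adj x q → G.Adj x r →
      G.neighborFinset x = {p, q, r} := by
    intro x p q r h1 h2 h3 a1 a2 a3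
    have hsub : ({p, q, r} : Finset V) ⊆ G.neighborFinset x := by
      intro z hz; simp only [Finset.mem_insert, Finset.mem_singleton] at hz
      rw [SimpleGraph.mem_neighborFinset]
      rcases hz with rfl | rfl | rfl <;> assumption
    have hle : (G.neighborFinset x).card ≤ ({p, q, r} : Finset V).card := by
      rw [G.card_neighborFinset_eq_degree, hcubic x,
        Finset.card_insert_of_notMem (by simp [h1, h2]),
        Finset.card_insert_of_notMem (by simp [h3]), Finset.card_singleton]
    exact (Finset.eq_of_subset_of_card_le hsub hle).symm
  have hclosed : ∀ x y : V, G.Adj x y → x ∈ S → y ∈ S := by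
    intro x y hxy hxS
    have hmemS : ∀ z : V, z ∈ ({v, a, b, c} : Finset V) → z ∈ S := by
      intro z hz; simp only [Finset.mem_insert, Finset.mem_singleton] at hz
      simp only [hSdef, Set.mem_insert_iff, Set.mem_singleton_iff]; tauto
    simp only [hSdef, Set.mem_insert_iff, Set.mem_singleton_iff] at hxS
    rcases hxS with rfl | rfl | rfl | rfl
    · have := nbr x a b c hab hac hbc hva hvb hvc
      have hy : y ∈ ({a, b, c} : Finset V) := by
        rw [← this, SimpleGraph.mem_neighborFinset]; exact hxy
      apply hmemS; simp only [Finset.mem_insert, Finset.mem_singleton] at hy ⊢; tauto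
    · have := nbr x v b c hvb.ne hvc.ne hbc hva.symm habN hacN
      have hy : y ∈ ({v, b, c} : Finset V) := by
        rw [← this, SimpleGraph.mem_neighborFinset]; exact hxy
      apply hmemS; simp only [Finset.mem_insert, Finset.mem_singleton] at hy ⊢; tauto
    · have := nbr x v a c hva.ne hvc.ne hac hvb.symm habN.symm hbcN
      have hy : y ∈ ({v, a, c} : Finset V) := by
        rw [← this, SimpleGraph.mem_neighborFinset]; exact hxy
      apply hmemS; simp only [Finset.mem_insert, Finset.mem_singleton] at hy ⊢; tauto
    · have := nbr x v a b hva.ne hvb.ne hab hvc.symm hacN.symm hbcN.symm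
      have hy : y ∈ ({v, a, b} : Finset V) := by
        rw [← this, SimpleGraph.mem_neighborFinset]; exact hxy
      apply hmemS; simp only [Finset.mem_insert, Finset.mem_singleton] at hy ⊢; tauto
  have hvS : v ∈ S := by simp [hSdef]
  have hsupp : (G.connectedComponentMk v).supp = S := by
    ext w
    simp only [SimpleGraph.ConnectedComponent.mem_supp_iff,
      SimpleGraph.ConnectedComponent.eq]
    constructor
    · intro h
      obtain ⟨p⟩ := h.symm
      have step : ∀ ⦃x y : V⦄, G.Walk x y → x ∈ S → y ∈ S := by
        intro x y p
        induction p with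
        | nil => exact id
        | cons h q ih => intro hx; exact ih (hclosed _ _ h hx)
      exact step p hvS
    · intro hw
      simp only [hSdef, Set.mem_insert_iff, Set.mem_singleton_iff] at hw
      rcases hw with rfl | rfl | rfl | rfl
      · exact SimpleGraph.Reachable.refl _
      · exact hva.symm.reachable
      · exact hvb.symm.reachable
      · exact hvc.symm.reachable
  rw [hsupp]
  -- now build the isomorphism
  have hfull : ∀ x ∈ S, ∀ y ∈ S, x ≠ y → G.Adj x y := by
    intro x hx y hy hxy
    simp only [hSdef, Set.mem_insert_iff, Set.mem_singleton_iff] at hx hy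
    rcases hx with rfl | rfl | rfl | rfl <;> rcases hy with rfl | rfl | rfl | rfl <;>
      first
        | exact absurd rfl hxy
        | assumption
        | exact hva.symm
        | exact hvb.symm
        | exact hvc.symm
        | exact habN.symm
        | exact hacN.symm
        | exact hbcN.symm
  have hvmem : v ∈ S := hvS
  have hamem : a ∈ S := by simp [hSdef]
  have hbmem : b ∈ S := by simp [hSdef]
  have hcmem : c ∈ S := by simp [hSdef]
  have hvna : v ≠ a := hva.ne
  have hvnb : v ≠ b := hvb.ne
  have hvnc : v ≠ c := hvc.ne
  let e : S ≃ Fin 4 :=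
    { toFun := fun x => if x.1 = v then 0 else if x.1 = a then 1 else if x.1 = b then 2 else 3
      invFun := ![⟨v, hvmem⟩, ⟨a, hamem⟩, ⟨b, hbmem⟩, ⟨c, hcmem⟩]
      left_inv := by
        rintro ⟨x, hx⟩
        simp only [hSdef, Set.mem_insert_iff, Set.mem_singleton_iff] at hx
        rcases hx with rfl | rfl | rfl | rfl <;>
          simp [hvna, hvnb, hvnc, hvna.symm, hvnb.symm, hvnc.symm, hab, hac, hbc,
            hab.symm, hac.symm, hbc.symm]
      right_inv := by
        intro i
        fin_cases i <;>
          simp [hvna, hvnb, hvnc, hvna.symm, hvnb.symm, hvnc.symm, hab, hac, hbc,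
            hab.symm, hac.symm, hbc.symm] }
  refine ⟨{ toEquiv := e, map_rel_iff' := ?_ }⟩
  intro x y
  simp only [SimpleGraph.completeGraph, SimpleGraph.top_adj]
  constructor
  · intro h
    have hxy : x ≠ y := fun hh => h (by rw [hh])
    have : x.1 ≠ y.1 := fun hh => hxy (Subtype.ext hh)
    exact hfull x.1 x.2 y.1 y.2 this
  · intro h
    have hG : G.Adj (x : V) (y : V) := h
    have : x.1 ≠ y.1 := hG.ne
    intro hh
    exact this (congrArg Subtype.val (e.injective hh))
end

section
/- In a claw-free cubic graph, any two distinct diamonds (induced subgraphs isomorphic to K_4 minus an edge) are vertex-disjoint. -/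
lemma diamond_structure {V : Type*} [DecidableEq V] (G : SimpleGraph V) (s : Finset V)
    (hs : IsDiamond G s) :
    ∃ a b c d : V, s = {a,b,c,d} ∧ s.card = 4 ∧
      a ≠ b ∧ a ≠ c ∧ a ≠ d ∧ b ≠ c ∧ b ≠ d ∧ c ≠ d ∧
      ¬ G.Adj a b ∧ G.Adj a c ∧ G.Adj a d ∧ G.Adj b c ∧ G.Adj b d ∧ G.Adj c d := by
  obtain ⟨e⟩ := hs
  classical
  have hcard : s.card = 4 := by
    have := Fintype.card_congr e.toEquiv
    simpa using this
  set f := e.symm with hf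
  have hne : ∀ i j : Fin 4, i ≠ j → ((f i : V) ≠ (f j : V)) := by
    intro i j hij h
    exact hij (f.injective (Subtype.ext h))
  have hadj : ∀ i j : Fin 4, diamondGraph.Adj i j → G.Adj (f i : V) (f j : V) := by
    intro i j h
    have := f.map_adj_iff.mpr h
    simpa using this
  have hnadj : ¬ G.Adj (f 0 : V) (f 1 : V) := by
    intro h
    have : (G.induce (↑s : Set V)).Adj (f 0) (f 1) := by simpa using h
    have := f.map_adj_iff.mp this
    simp [diamondGraph] at this
  refine ⟨f 0, f 1, f 2, f 3, ?_, hcard,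
    hne 0 1 (by decide), hne 0 2 (by decide), hne 0 3 (by decide),
    hne 1 2 (by decide), hne 1 3 (by decide), hne 2 3 (by decide),
    hnadj,
    hadj 0 2 (by simp [diamondGraph]), hadj 0 3 (by simp [diamondGraph]),
    hadj 1 2 (by simp [diamondGraph]), hadj 1 3 (by simp [diamondGraph]),
    hadj 2 3 (by simp [diamondGraph])⟩
  have hsub : ({(f 0 : V), (f 1 : V), (f 2 : V), (f 3 : V)} : Finset V) ⊆ s := by
    intro x hx
    simp only [Finset.mem_insert, Finset.mem_singleton] at hx
    rcases hx with rfl|rfl|rfl|rfl <;> exact (f _).2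
  have hc4 : ({(f 0 : V), (f 1 : V), (f 2 : V), (f 3 : V)} : Finset V).card = 4 := by
    rw [Finset.card_insert_of_notMem (by
          simp only [Finset.mem_insert, Finset.mem_singleton]
          push_neg
          exact ⟨hne 0 1 (by decide), hne 0 2 (by decide), hne 0 3 (by decide)⟩),
        Finset.card_insert_of_notMem (by
          simp only [Finset.mem_insert, Finset.mem_singleton]
          push_neg
          exact ⟨hne 1 2 (by decide), hne 1 3 (by decide)⟩),
        Finset.card_insert_of_notMem (by
          simpa using hne 2 3 (by decide)),
        Finset.card_singleton]
  exact (Finset.eq_of_subset_of_card_le hsub (by omega)).symm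

lemma three_nbrs {V : Type*} [Fintype V] [DecidableEq V] (G : SimpleGraph V) [DecidableRel G.Adj]
    {v p q r w : V} (hdeg : G.degree v = 3)
    (hpq : p ≠ q) (hpr : p ≠ r) (hqr : q ≠ r)
    (hp : G.Adj v p) (hq : G.Adj v q) (hr : G.Adj v r) (hw : G.Adj v w) :
    w = p ∨ w = q ∨ w = r := by
  have hsub : ({p,q,r} : Finset V) ⊆ G.neighborFinset v := by
    intro x hx
    simp only [Finset.mem_insert, Finset.mem_singleton] at hx
    rcases hx with rfl|rfl|rfl <;> simpa [SimpleGraph.mem_neighborFinset] using ‹_›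
  have hc : ({p,q,r} : Finset V).card = 3 := by
    rw [Finset.card_insert_of_notMem (by
          simp only [Finset.mem_insert, Finset.mem_singleton]; push_neg; exact ⟨hpq, hpr⟩),
        Finset.card_insert_of_notMem (by simpa using hqr), Finset.card_singleton]
  have hdegc : (G.neighborFinset v).card = 3 := hdeg
  have heq : ({p,q,r} : Finset V) = G.neighborFinset v :=
    Finset.eq_of_subset_of_card_le hsub (by omega)
  have hwmem : w ∈ ({p,q,r} : Finset V) := by
    rw [heq]; simpa [SimpleGraph.mem_neighborFinset] using hw
  simpa using hwmem

lemma diamond_two_nbrs {V : Type*} [DecidableEq V] (G : SimpleGraph V) {v : V} {t : Finset V}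
    (ht : IsDiamond G t) (hv : v ∈ t) :
    ∃ p q, p ∈ t ∧ q ∈ t ∧ p ≠ q ∧ G.Adj v p ∧ G.Adj v q := by
  obtain ⟨a, b, c, d, hteq, -, hab, hac, had, hbc, hbd, hcd, hnab, hAac, hAad, hAbc, hAbd, hAcd⟩ :=
    diamond_structure G t ht
  have hma : a ∈ t := by rw [hteq]; simp
  have hmb : b ∈ t := by rw [hteq]; simp
  have hmc : c ∈ t := by rw [hteq]; simp
  have hmd : d ∈ t := by rw [hteq]; simp
  rw [hteq] at hv
  simp only [Finset.mem_insert, Finset.mem_singleton] at hv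
  rcases hv with rfl|rfl|rfl|rfl
  · exact ⟨c, d, hmc, hmd, hcd, hAac, hAad⟩
  · exact ⟨c, d, hmc, hmd, hcd, hAbc, hAbd⟩
  · exact ⟨a, d, hma, hmd, had, hAac.symm, hAcd⟩
  · exact ⟨a, c, hma, hmc, hac, hAad.symm, hAcd.symm⟩

lemma diamond_one_nonedge {V : Type*} [DecidableEq V] (G : SimpleGraph V)
    {u v x y : V} {t : Finset V} (ht : IsDiamond G t)
    (hu : u ∈ t) (hv : v ∈ t) (hx : x ∈ t) (hy : y ∈ t)
    (huv : ¬ G.Adj u v) (hxy : ¬ G.Adj x y)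
    (hune : u ≠ v) (hxne : x ≠ y)
    (h1 : u ≠ x) (h2 : u ≠ y) (h3 : v ≠ x) (h4 : v ≠ y) : False := by
  obtain ⟨a, b, c, d, hteq, -, hab, hac, had, hbc, hbd, hcd, hnab, hAac, hAad, hAbc, hAbd, hAcd⟩ :=
    diamond_structure G t ht
  have hAca := hAac.symm
  have hAda := hAad.symm
  have hAcb := hAbc.symm
  have hAdb := hAbd.symm
  have hAdc := hAcd.symm
  rw [hteq] at hu hv hx hy
  simp only [Finset.mem_insert, Finset.mem_singleton] at hu hv hx hy
  rcases hu with rfl|rfl|rfl|rfl <;> rcases hv with rfl|rfl|rfl|rfl <;>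
    rcases hx with rfl|rfl|rfl|rfl <;> rcases hy with rfl|rfl|rfl|rfl <;> tauto


lemma card_le_three {V : Type*} [DecidableEq V] (a b c : V) :
    ({a,b,c} : Finset V).card ≤ 3 := by
  have u1 := Finset.card_insert_le a ({b,c} : Finset V)
  have u2 := Finset.card_insert_le b ({c} : Finset V)
  have u3 : ({c} : Finset V).card = 1 := Finset.card_singleton c
  omega

lemma card_four {V : Type*} [DecidableEq V] {a b c d : V}
    (h1 : a ≠ b) (h2 : a ≠ c) (h3 : a ≠ d) (h4 : b ≠ c) (h5 : b ≠ d) (h6 : c ≠ d) :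
    ({a,b,c,d} : Finset V).card = 4 := by
  rw [Finset.card_insert_of_notMem (by
        simp only [Finset.mem_insert, Finset.mem_singleton]
        push_neg
        exact ⟨h1, h2, h3⟩),
      Finset.card_insert_of_notMem (by
        simp only [Finset.mem_insert, Finset.mem_singleton]
        push_neg
        exact ⟨h4, h5⟩),
      Finset.card_insert_of_notMem (by simpa using h6),
      Finset.card_singleton]

/-- Case: both centers `c, d` of `s` and the end `a` lie in `t`. -/
lemma sub1 {V : Type*} [DecidableEq V] (G : SimpleGraph V)
    {a b c d : V} {s t : Finset V}
    (hseq : s = {a,b,c,d}) (hscard : s.card = 4)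
    (hab : a ≠ b) (hac : a ≠ c) (had : a ≠ d) (hbc : b ≠ c) (hbd : b ≠ d) (hcd : c ≠ d)
    (hNc : ∀ w, G.Adj c w → w = a ∨ w = b ∨ w = d)
    (hNd : ∀ w, G.Adj d w → w = a ∨ w = b ∨ w = c)
    (ht : IsDiamond G t) (hne : s ≠ t)
    (hat : a ∈ t) (hct : c ∈ t) (hdt : d ∈ t) : False := by
  obtain ⟨-, -, -, -, -, htcard, -⟩ := diamond_structure G t ht
  -- the fourth vertex of t
  have hnotsub : ¬ t ⊆ ({a,c,d} : Finset V) := by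
    intro h
    have h1 := Finset.card_le_card h
    have h2 : ({a,c,d} : Finset V).card ≤ 3 := card_le_three a c d
    omega
  obtain ⟨x, hxt, hxm⟩ := Finset.not_subset.mp hnotsub
  simp only [Finset.mem_insert, Finset.mem_singleton] at hxm
  push_neg at hxm
  obtain ⟨hxa, hxc, hxd⟩ := hxm
  have hxb : x ≠ b := by
    rintro rfl
    apply hne
    apply Finset.eq_of_subset_of_card_le _ (by omega)
    rw [hseq]
    intro y hy
    simp only [Finset.mem_insert, Finset.mem_singleton] at hy
    rcases hy with rfl|rfl|rfl|rfl <;> assumption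
  obtain ⟨p, q, hpt, hqt, hpq, hxp, hxq⟩ := diamond_two_nbrs G ht hxt
  -- t = {a, c, d, x}
  have hteq4 : t = ({a, c, d, x} : Finset V) := by
    symm
    apply Finset.eq_of_subset_of_card_le
    · intro y hy
      simp only [Finset.mem_insert, Finset.mem_singleton] at hy
      rcases hy with rfl|rfl|rfl|rfl <;> assumption
    · rw [htcard, card_four hac had hxa.symm hcd hxc.symm hxd.symm]
  have key : ∀ y, y ∈ t → G.Adj x y → y = a := by
    intro y hy hxy
    rw [hteq4] at hy
    simp only [Finset.mem_insert, Finset.mem_singleton] at hy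
    rcases hy with rfl|rfl|rfl|rfl
    · rfl
    · rcases hNc x hxy.symm with rfl|rfl|rfl
      · exact absurd rfl hxa
      · exact absurd rfl hxb
      · exact absurd rfl hxd
    · rcases hNd x hxy.symm with rfl|rfl|rfl
      · exact absurd rfl hxa
      · exact absurd rfl hxb
      · exact absurd rfl hxc
    · exact absurd rfl hxy.ne
  have hp := key p hpt hxp
  have hq := key q hqt hxq
  rw [hp, hq] at hpq
  exact hpq rfl

/-- Case: the two ends `a, b` and the center `c` of `s` lie in `t`. -/
lemma sub2 {V : Type*} [DecidableEq V] (G : SimpleGraph V)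
    {a b c d : V} {s t : Finset V}
    (hseq : s = {a,b,c,d}) (hscard : s.card = 4)
    (hab : a ≠ b) (hac : a ≠ c) (had : a ≠ d) (hbc : b ≠ c) (hbd : b ≠ d) (hcd : c ≠ d)
    (hnab : ¬ G.Adj a b)
    (hNc : ∀ w, G.Adj c w → w = a ∨ w = b ∨ w = d)
    (ht : IsDiamond G t) (hne : s ≠ t)
    (hat : a ∈ t) (hbt : b ∈ t) (hct : c ∈ t) : False := by
  obtain ⟨-, -, -, -, -, htcard, -⟩ := diamond_structure G t ht
  have hnotsub : ¬ t ⊆ ({a,b,c} : Finset V) := by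
    intro h
    have h1 := Finset.card_le_card h
    have h2 : ({a,b,c} : Finset V).card ≤ 3 := card_le_three a b c
    omega
  obtain ⟨x, hxt, hxm⟩ := Finset.not_subset.mp hnotsub
  simp only [Finset.mem_insert, Finset.mem_singleton] at hxm
  push_neg at hxm
  obtain ⟨hxa, hxb, hxc⟩ := hxm
  have hxd : x ≠ d := by
    rintro rfl
    apply hne
    apply Finset.eq_of_subset_of_card_le _ (by omega)
    rw [hseq]
    intro y hy
    simp only [Finset.mem_insert, Finset.mem_singleton] at hy
    rcases hy with rfl|rfl|rfl|rfl <;> assumption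
  -- x is not adjacent to c
  have hnxc : ¬ G.Adj x c := by
    intro h
    rcases hNc x h.symm with rfl|rfl|rfl
    · exact absurd rfl hxa
    · exact absurd rfl hxb
    · exact absurd rfl hxd
  exact diamond_one_nonedge G ht hat hbt hct hxt hnab
    (fun h => hnxc h.symm) hab hxc.symm hac (Ne.symm hxa) hbc (Ne.symm hxb)

/-- Case: a center `c` of `s` lies in `t`. -/
lemma center_case {V : Type*} [Fintype V] [DecidableEq V] (G : SimpleGraph V)
    [DecidableRel G.Adj] (hcubic : ∀ v : V, G.degree v = 3)
    {a b c d : V} {s t : Finset V}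
    (hseq : s = {a,b,c,d}) (hscard : s.card = 4)
    (hab : a ≠ b) (hac : a ≠ c) (had : a ≠ d) (hbc : b ≠ c) (hbd : b ≠ d) (hcd : c ≠ d)
    (hnab : ¬ G.Adj a b)
    (hAac : G.Adj a c) (hAad : G.Adj a d) (hAbc : G.Adj b c) (hAbd : G.Adj b d)
    (hAcd : G.Adj c d)
    (ht : IsDiamond G t) (hne : s ≠ t) (hct : c ∈ t) : False := by
  have hNc : ∀ w, G.Adj c w → w = a ∨ w = b ∨ w = d :=
    fun w hw => three_nbrs G (hcubic c) hab had hbd hAac.symm hAbc.symm hAcd hw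
  have hNd : ∀ w, G.Adj d w → w = a ∨ w = b ∨ w = c :=
    fun w hw => three_nbrs G (hcubic d) hab hac hbc hAad.symm hAbd.symm hAcd.symm hw
  obtain ⟨p, q, hpt, hqt, hpq, hcp, hcq⟩ := diamond_two_nbrs G ht hct
  have hseq' : s = ({b,a,c,d} : Finset V) := by
    rw [hseq]; ext y; simp; tauto
  rcases hNc p hcp with rfl|rfl|rfl <;> rcases hNc q hcq with rfl|rfl|rfl
  · exact hpq rfl
  · -- a, b ∈ t
    exact sub2 G hseq hscard hab hac had hbc hbd hcd hnab hNc ht hne hpt hqt hct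
  · -- a, d ∈ t
    exact sub1 G hseq hscard hab hac had hbc hbd hcd hNc hNd ht hne hpt hct hqt
  · exact sub2 G hseq hscard hab hac had hbc hbd hcd hnab hNc ht hne hqt hpt hct
  · exact hpq rfl
  · -- b, d ∈ t : swap a and b
    refine sub1 G hseq' hscard hab.symm hbc hbd hac had hcd ?_ ?_ ht hne hpt hct hqt
    · intro w hw; rcases hNc w hw with h|h|h <;> tauto
    · intro w hw; rcases hNd w hw with h|h|h <;> tauto
  · exact sub1 G hseq hscard hab hac had hbc hbd hcd hNc hNd ht hne hqt hct hpt
  · refine sub1 G hseq' hscard hab.symm hbc hbd hac had hcd ?_ ?_ ht hne hqt hct hpt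
    · intro w hw; rcases hNc w hw with h|h|h <;> tauto
    · intro w hw; rcases hNd w hw with h|h|h <;> tauto
  · exact hpq rfl

/-- Case: an end `a` of `s` lies in `t`, but neither center does. -/
lemma end_case {V : Type*} [Fintype V] [DecidableEq V] (G : SimpleGraph V)
    [DecidableRel G.Adj] {a c d : V} {t : Finset V}
    (hdeg : G.degree a = 3) (hAac : G.Adj a c) (hAad : G.Adj a d) (hcd : c ≠ d)
    (hct : c ∉ t) (hdt : d ∉ t) (ht : IsDiamond G t) (hat : a ∈ t) : False := by
  obtain ⟨p, q, hpt, hqt, hpq, hap, haq⟩ := diamond_two_nbrs G ht hat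
  have hpc : p ≠ c := fun h => hct (h ▸ hpt)
  have hpd : p ≠ d := fun h => hdt (h ▸ hpt)
  have hqc : q ≠ c := fun h => hct (h ▸ hqt)
  have hqd : q ≠ d := fun h => hdt (h ▸ hqt)
  have hsub : ({p, q, c, d} : Finset V) ⊆ G.neighborFinset a := by
    intro y hy
    simp only [Finset.mem_insert, Finset.mem_singleton] at hy
    rcases hy with rfl|rfl|rfl|rfl <;> simpa [SimpleGraph.mem_neighborFinset] using ‹_›
  have hc4 : ({p, q, c, d} : Finset V).card = 4 :=
    card_four hpq hpc hpd hqc hqd hcd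
  have := Finset.card_le_card hsub
  rw [hc4] at this
  have hdegc : (G.neighborFinset a).card = 3 := hdeg
  omega

lemma main_thm {V : Type*} [Fintype V] [DecidableEq V] (G : SimpleGraph V) [DecidableRel G.Adj]
    (hcubic : ∀ v : V, G.degree v = 3)
    (s t : Finset V) (hs : IsDiamond G s) (ht : IsDiamond G t) (hne : s ≠ t) :
    Disjoint s t := by
  rw [Finset.disjoint_left]
  intro v hvs hvt
  obtain ⟨a, b, c, d, hseq, hscard, hab, hac, had, hbc, hbd, hcd,
    hnab, hAac, hAad, hAbc, hAbd, hAcd⟩ := diamond_structure G s hs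
  have hcnt : c ∉ t := fun h =>
    center_case G hcubic hseq hscard hab hac had hbc hbd hcd hnab
      hAac hAad hAbc hAbd hAcd ht hne h
  have hdnt : d ∉ t := by
    intro h
    have hseq' : s = ({a,b,d,c} : Finset V) := by rw [hseq]; ext y; simp; tauto
    exact center_case G hcubic hseq' hscard hab had hac hbd hbc hcd.symm hnab
      hAad hAac hAbd hAbc hAcd.symm ht hne h
  rw [hseq] at hvs
  simp only [Finset.mem_insert, Finset.mem_singleton] at hvs
  rcases hvs with rfl|rfl|rfl|rfl
  · exact end_case G (hcubic v) hAac hAad hcd hcnt hdnt ht hvt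
  · exact end_case G (hcubic v) hAbc hAbd hcd hcnt hdnt ht hvt
  · exact hcnt hvt
  · exact hdnt hvt

/-- In a claw-free cubic graph, two distinct diamonds are vertex-disjoint. -/
theorem distinct_diamonds_disjoint
    {V : Type*} [Fintype V] [DecidableEq V] (G : SimpleGraph V) [DecidableRel G.Adj]
    (hclaw : ClawFree G) (hcubic : ∀ v : V, G.degree v = 3)
    (s t : Finset V) (hs : IsDiamond G s) (ht : IsDiamond G t) (hne : s ≠ t) :
    Disjoint s t :=
  main_thm G hcubic s t hs ht hne
end

section
/- Let G be a 2-edge-connected claw-free cubic graph, let D be the vertex set of a maximal string of diamonds in G, and let u, v be the two vertices outside D adjacent to vertices of D. Then u ≠ v and u and v are nonadjacent in G. -/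
/-- A string of diamonds: a nonempty sequence of pairwise disjoint diamonds in which
consecutive diamonds are joined by an edge. -/
def IsDiamondString {V : Type*} [DecidableEq V] (G : SimpleGraph V) (D : Finset V) : Prop :=
  ∃ k : ℕ, 0 < k ∧ ∃ f : Fin k → Finset V,
    (∀ i, IsDiamond G (f i)) ∧
    (∀ i j, i ≠ j → Disjoint (f i) (f j)) ∧
    D = Finset.univ.biUnion f ∧
    ∀ (i : ℕ) (h : i + 1 < k),
      ∃ x ∈ f ⟨i, Nat.lt_of_succ_lt h⟩, ∃ y ∈ f ⟨i + 1, h⟩, G.Adj x y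

/-- A maximal string of diamonds. -/
def IsMaximalDiamondString {V : Type*} [DecidableEq V] (G : SimpleGraph V)
    (D : Finset V) : Prop :=
  IsDiamondString G D ∧ ∀ D' : Finset V, IsDiamondString G D' → D ⊆ D' → D = D'

section Aux

open Finset

instance : DecidableRel diamondGraph.Adj := fun a b =>
  decidable_of_iff (a ≠ b ∧ ¬ s(a,b) = s(0,1)) (by
    simp [diamondGraph, SimpleGraph.completeGraph])

/-- degree function of the diamond graph -/
def ddeg (v : Fin 4) : ℕ := (Finset.univ.filter (diamondGraph.Adj v)).card

variable {V : Type*} [DecidableEq V] {G : SimpleGraph V} [DecidableRel G.Adj]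

omit [DecidableEq V] [DecidableRel G.Adj] in
lemma diamond_card {s : Finset V} (h : IsDiamond G s) : s.card = 4 := by
  obtain ⟨e⟩ := h
  have := Fintype.card_congr e.toEquiv
  simpa using this

lemma diamond_deg {s : Finset V} (e : G.induce (↑s : Set V) ≃g diamondGraph) {x : V}
    (hx : x ∈ s) : (s.filter (G.Adj x)).card = ddeg (e ⟨x, by simpa using hx⟩) := by
  refine Finset.card_bij' (fun y hy => e ⟨y, by simp [(Finset.mem_filter.1 hy).1]⟩)
    (fun j _ => ((e.symm j : (↑s : Set V)) : V)) ?_ ?_ ?_ ?_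
  · intro y hy
    rw [Finset.mem_filter] at hy
    simp only [Finset.mem_filter, Finset.mem_univ, true_and]
    exact e.map_rel_iff.2 (by simpa using hy.2)
  · intro j hj
    rw [Finset.mem_filter] at hj ⊢
    refine ⟨(e.symm j).2, ?_⟩
    have : diamondGraph.Adj (e ⟨x, by simpa using hx⟩) (e (e.symm j)) := by
      simpa using hj.2
    simpa using e.map_rel_iff.1 this
  · intro y hy; simp
  · intro j hj; simp

lemma diamond_sum {s : Finset V} (e : G.induce (↑s : Set V) ≃g diamondGraph) :
    ∑ x ∈ s, (s.filter (G.Adj x)).card = 10 := by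
  have h10 : ∑ v : Fin 4, ddeg v = 10 := by decide
  rw [← h10]
  refine Finset.sum_bij (fun x hx => e ⟨x, by simpa using hx⟩) ?_ ?_ ?_ ?_
  · intro x hx; simp
  · intro x hx y hy h
    have := e.toEquiv.injective h
    simpa using congrArg Subtype.val this
  · intro j _
    exact ⟨((e.symm j : (↑s : Set V)) : V), by simpa using (e.symm j).2, by simp⟩
  · intro x hx
    exact diamond_deg e hx

lemma diamond_deg_ge {s : Finset V} (h : IsDiamond G s) {x : V} (hx : x ∈ s) :
    2 ≤ (s.filter (G.Adj x)).card := by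
  obtain ⟨e⟩ := h
  rw [diamond_deg e hx]
  exact (by decide : ∀ v, 2 ≤ ddeg v) _

lemma diamond_tips_nonadj {s : Finset V} (h : IsDiamond G s) {x y : V} (hx : x ∈ s) (hy : y ∈ s)
    (hdx : (s.filter (G.Adj x)).card = 2) (hdy : (s.filter (G.Adj y)).card = 2) :
    ¬ G.Adj x y := by
  obtain ⟨e⟩ := h
  rw [diamond_deg e hx] at hdx
  rw [diamond_deg e hy] at hdy
  intro hadj
  have hADJ : diamondGraph.Adj (e ⟨x, by simpa using hx⟩) (e ⟨y, by simpa using hy⟩) :=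
    e.map_rel_iff.2 (by simpa using hadj)
  have key : ∀ v w : Fin 4, ddeg v = 2 → ddeg w = 2 → ¬ diamondGraph.Adj v w := by decide
  exact key _ _ hdx hdy hADJ

omit [DecidableEq V] [DecidableRel G.Adj] in
lemma walk_closed {S : Set V}
    (hS : ∀ p ∈ S, ∀ q, G.Adj p q → q ∈ S) : ∀ {x y : V}, G.Walk x y → x ∈ S → y ∈ S := by
  intro x y w
  induction w with
  | nil => exact fun h => h
  | cons h p ih => exact fun hx => ih (hS _ hx _ h)

end Aux

open Finset in
set_option maxHeartbeats 2000000 in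
/-- If `D` is a maximal string of diamonds in a 2-edge-connected claw-free cubic graph
and `u`, `v` are the two vertices outside `D` adjacent to `D`, then `u ≠ v` and
`u`, `v` are nonadjacent. -/
theorem string_attachments_distinct_nonadjacent
    {V : Type*} [Fintype V] [DecidableEq V] (G : SimpleGraph V) [DecidableRel G.Adj]
    (hconn : G.Connected) (hbridgeless : ∀ e ∈ G.edgeSet, ¬ G.IsBridge e)
    (hclaw : ClawFree G) (hcubic : ∀ v : V, G.degree v = 3)
    (D : Finset V) (hD : IsMaximalDiamondString G D)
    (u v : V) (hu : u ∉ D) (hv : v ∉ D)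
    (huD : ∃ x ∈ D, G.Adj u x) (hvD : ∃ x ∈ D, G.Adj v x)
    (honly : ∀ w : V, w ∉ D → (∃ x ∈ D, G.Adj w x) → w = u ∨ w = v) :
    u ≠ v ∧ ¬ G.Adj u v := by
  classical
  obtain ⟨⟨k, hk, f, hdia, hdisj, hDf, hjoin⟩, -⟩ := hD
  have hdeg3 : ∀ x : V, (G.neighborFinset x).card = 3 := fun x => by
    rw [SimpleGraph.card_neighborFinset_eq_degree]; exact hcubic x
  -- every diamond is inside D
  have hfiD : ∀ i : Fin k, f i ⊆ D := by
    intro i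
    rw [hDf]
    exact Finset.subset_biUnion_of_mem f (Finset.mem_univ i)
  -- splitting the neighborhood of a diamond vertex
  have hsplitgen : ∀ (i : Fin k), ∀ x ∈ f i,
      ((f i).filter (G.Adj x)).card + (G.neighborFinset x \ f i).card = 3 := by
    intro i x hx
    have h1 : ((G.neighborFinset x).filter (· ∈ f i)).card
        + ((G.neighborFinset x).filter (fun y => ¬ y ∈ f i)).card
        = (G.neighborFinset x).card :=
      Finset.card_filter_add_card_filter_not _
    have e1 : (G.neighborFinset x).filter (· ∈ f i) = (f i).filter (G.Adj x) := by
      ext y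
      simp only [Finset.mem_filter, SimpleGraph.mem_neighborFinset]
      tauto
    have e2 : (G.neighborFinset x).filter (fun y => ¬ y ∈ f i)
        = G.neighborFinset x \ f i := (Finset.sdiff_eq_filter _ _).symm
    rw [e1, e2, hdeg3 x] at h1
    exact h1
  -- sum over a diamond of "external degrees" is 2
  have hsum2 : ∀ i : Fin k, ∑ x ∈ f i, (G.neighborFinset x \ f i).card = 2 := by
    intro i
    have hA : ∑ x ∈ f i,
        (((f i).filter (G.Adj x)).card + (G.neighborFinset x \ f i).card) = 12 := by
      rw [Finset.sum_congr rfl (fun x hx => hsplitgen i x hx), Finset.sum_const,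
        diamond_card (hdia i)]
      norm_num
    have hB : ∑ x ∈ f i, ((f i).filter (G.Adj x)).card = 10 := diamond_sum (hdia i).some
    rw [Finset.sum_add_distrib, hB] at hA
    omega
  -- the index function
  have hexists : ∀ x : V, ∃ i : Fin k, x ∈ D → x ∈ f i := by
    intro x
    by_cases hx : x ∈ D
    · rw [hDf] at hx
      obtain ⟨i, -, hi⟩ := Finset.mem_biUnion.1 hx
      exact ⟨i, fun _ => hi⟩
    · exact ⟨⟨0, hk⟩, fun h => absurd h hx⟩
  choose idx hidx using hexists
  have huniqf : ∀ {x : V} {i j : Fin k}, x ∈ f i → x ∈ f j → i = j := by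
    intro x i j hxi hxj
    by_contra hne
    exact Finset.disjoint_left.1 (hdisj _ _ hne) hxi hxj
  have hidxu : ∀ {x : V} {i : Fin k}, x ∈ f i → idx x = i := by
    intro x i hxi
    exact huniqf (hidx x (hfiD i hxi)) hxi
  -- at most one neighbor outside one's own diamond
  have honecross : ∀ x ∈ D, (G.neighborFinset x \ f (idx x)).card ≤ 1 := by
    intro x hx
    have h1 := hsplitgen (idx x) x (hidx x hx)
    have h2 := diamond_deg_ge (hdia (idx x)) (hidx x hx)
    omega
  have honecross' : ∀ x ∈ D, ∀ y z : V, G.Adj x y → G.Adj x z →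
      y ∉ f (idx x) → z ∉ f (idx x) → y = z := by
    intro x hx y z hy hz hyf hzf
    by_contra hne
    have hsub : ({y, z} : Finset V) ⊆ G.neighborFinset x \ f (idx x) := by
      intro w hw
      rcases Finset.mem_insert.1 hw with h | h
      · subst h; simp [SimpleGraph.mem_neighborFinset, hy, hyf]
      · rw [Finset.mem_singleton.1 h]
        simp [SimpleGraph.mem_neighborFinset, hz, hzf]
    have : 2 ≤ (G.neighborFinset x \ f (idx x)).card := by
      calc 2 = ({y, z} : Finset V).card := (Finset.card_pair hne).symm
        _ ≤ _ := Finset.card_le_card hsub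
    have := honecross x hx
    omega
  have htipdeg : ∀ x ∈ D, ∀ y : V, G.Adj x y → y ∉ f (idx x) →
      ((f (idx x)).filter (G.Adj x)).card = 2 := by
    intro x hx y hy hyf
    have h3 := hsplitgen (idx x) x (hidx x hx)
    have h2 := diamond_deg_ge (hdia (idx x)) (hidx x hx)
    have h1 : 1 ≤ (G.neighborFinset x \ f (idx x)).card := by
      refine Finset.card_pos.2 ⟨y, ?_⟩
      simp [SimpleGraph.mem_neighborFinset, hy, hyf]
    omega
  -- total external degree
  have htot : ∑ x ∈ D, (G.neighborFinset x \ f (idx x)).card = 2 * k := by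
    rw [hDf, Finset.sum_biUnion (fun i _ j _ hne => hdisj i j hne)]
    have : ∀ i : Fin k, ∑ x ∈ f i, (G.neighborFinset x \ f (idx x)).card = 2 := by
      intro i
      rw [Finset.sum_congr rfl (fun x hx => by rw [hidxu hx])]
      exact hsum2 i
    rw [Finset.sum_congr rfl (fun i _ => this i), Finset.sum_const]
    simp [mul_comm]
  -- split external degree into cross (inside D) and out (outside D)
  have hsplitD : ∀ x ∈ D,
      ((G.neighborFinset x \ f (idx x)).filter (· ∈ D)).card
        + (G.neighborFinset x \ D).card
      = (G.neighborFinset x \ f (idx x)).card := by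
    intro x hx
    have h1 := Finset.card_filter_add_card_filter_not
      (s := G.neighborFinset x \ f (idx x)) (p := (· ∈ D))
    have e2 : (G.neighborFinset x \ f (idx x)).filter (fun y => ¬ y ∈ D)
        = G.neighborFinset x \ D := by
      ext y
      simp only [Finset.mem_filter, Finset.mem_sdiff]
      have himp : y ∈ f (idx x) → y ∈ D := fun h => hfiD _ h
      tauto
    rw [e2] at h1
    exact h1
  have hcrossout :
      ∑ x ∈ D, ((G.neighborFinset x \ f (idx x)).filter (· ∈ D)).card
        + ∑ x ∈ D, (G.neighborFinset x \ D).card = 2 * k := by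
    rw [← Finset.sum_add_distrib, Finset.sum_congr rfl (fun x hx => hsplitD x hx), htot]
  -- lower bound on cross edges from the joins
  have hjoin' : ∀ i : Fin (k - 1), ∃ p : V × V,
      p.1 ∈ f ⟨i.val, by omega⟩ ∧ p.2 ∈ f ⟨i.val + 1, by have := i.isLt; omega⟩
        ∧ G.Adj p.1 p.2 := by
    intro i
    have hlt : i.val + 1 < k := by have := i.isLt; omega
    obtain ⟨x, hx, y, hy, hxy⟩ := hjoin i.val hlt
    exact ⟨(x, y), hx, hy, hxy⟩
  choose P hP1 hP2 hP3 using hjoin'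
  have hinj : 2 * (k - 1)
      ≤ ∑ x ∈ D, ((G.neighborFinset x \ f (idx x)).filter (· ∈ D)).card := by
    rw [← Finset.card_sigma]
    have hmapsnd : ∀ (a b : V) (i1 i2 : Fin k), a ∈ f i1 → b ∈ f i2 → i1 ≠ i2 → G.Adj a b →
        (⟨a, b⟩ : (_ : V) × V) ∈
          D.sigma (fun x => (G.neighborFinset x \ f (idx x)).filter (· ∈ D)) := by
      intro a b i1 i2 ha hb hne hab
      rw [Finset.mem_sigma]
      refine ⟨hfiD _ ha, ?_⟩
      rw [Finset.mem_filter, Finset.mem_sdiff]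
      refine ⟨⟨SimpleGraph.mem_neighborFinset _ _ _ |>.2 hab, ?_⟩, hfiD _ hb⟩
      rw [hidxu ha]
      exact fun hbf => hne (huniqf hbf hb)
    have hcard : (Finset.univ : Finset (Fin (k - 1) × Bool)).card = 2 * (k - 1) := by
      simp [mul_comm]
    rw [← hcard]
    refine Finset.card_le_card_of_injOn
      (fun ib => if ib.2 then (⟨(P ib.1).2, (P ib.1).1⟩ : (_ : V) × V)
        else ⟨(P ib.1).1, (P ib.1).2⟩) ?_ ?_
    · rintro ⟨i, b⟩ -
      have hne12 : (⟨i.val, by omega⟩ : Fin k) ≠ ⟨i.val + 1, by have := i.isLt; omega⟩ := by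
        simp [Fin.ext_iff]
      cases b with
      | false =>
        simpa using hmapsnd (P i).1 (P i).2 _ _ (hP1 i) (hP2 i) hne12 (hP3 i)
      | true =>
        simpa using hmapsnd (P i).2 (P i).1 _ _ (hP2 i) (hP1 i) hne12.symm (hP3 i).symm
    · rintro ⟨i, b⟩ - ⟨j, c⟩ - heq
      have h1 := congrArg Sigma.fst heq
      have h2 := congrArg Sigma.snd heq
      simp only at h1 h2
      cases b <;> cases c <;> simp only [if_true, if_false, Bool.false_eq_true] at h1 h2 ⊢
      · -- false false
        have : (⟨i.val, by omega⟩ : Fin k) = ⟨j.val, by omega⟩ :=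
          huniqf (hP1 i) (h1 ▸ hP1 j)
        have : i.val = j.val := by simpa [Fin.ext_iff] using this
        exact Prod.ext (Fin.ext this) rfl
      · -- false true
        have e1 : (⟨i.val, by omega⟩ : Fin k) = ⟨j.val + 1, by have := j.isLt; omega⟩ :=
          huniqf (hP1 i) (h1 ▸ hP2 j)
        have e2 : (⟨i.val + 1, by have := i.isLt; omega⟩ : Fin k) = ⟨j.val, by omega⟩ :=
          huniqf (hP2 i) (h2 ▸ hP1 j)
        have e1' : i.val = j.val + 1 := by simpa [Fin.ext_iff] using e1
        have e2' : i.val + 1 = j.val := by simpa [Fin.ext_iff] using e2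
        omega
      · -- true false
        have e1 : (⟨i.val + 1, by have := i.isLt; omega⟩ : Fin k) = ⟨j.val, by omega⟩ :=
          huniqf (hP2 i) (h1 ▸ hP1 j)
        have e2 : (⟨i.val, by omega⟩ : Fin k) = ⟨j.val + 1, by have := j.isLt; omega⟩ :=
          huniqf (hP1 i) (h2 ▸ hP2 j)
        have e1' : i.val + 1 = j.val := by simpa [Fin.ext_iff] using e1
        have e2' : i.val = j.val + 1 := by simpa [Fin.ext_iff] using e2
        omega
      · -- true true
        have : (⟨i.val + 1, by have := i.isLt; omega⟩ : Fin k)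
            = ⟨j.val + 1, by have := j.isLt; omega⟩ :=
          huniqf (hP2 i) (h1 ▸ hP2 j)
        have : i.val = j.val := by simpa [Fin.ext_iff] using this
        exact Prod.ext (Fin.ext this) rfl
  have houtsum : ∑ x ∈ D, (G.neighborFinset x \ D).card ≤ 2 := by omega
  -- the finset of attachment pairs
  set OutP : Finset ((_ : V) × V) := D.sigma (fun x => G.neighborFinset x \ D) with hOutPdef
  have hmemOutP : ∀ (x w : V), x ∈ D → w ∉ D → G.Adj x w →
      (⟨x, w⟩ : (_ : V) × V) ∈ OutP := by
    intro x w hx hw hadj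
    rw [hOutPdef, Finset.mem_sigma, Finset.mem_sdiff]
    exact ⟨hx, SimpleGraph.mem_neighborFinset _ _ _ |>.2 hadj, hw⟩
  have hOutspec : ∀ r ∈ OutP, r.1 ∈ D ∧ G.Adj r.1 r.2 ∧ r.2 ∉ D := by
    intro r hr
    rw [hOutPdef, Finset.mem_sigma, Finset.mem_sdiff, SimpleGraph.mem_neighborFinset] at hr
    exact ⟨hr.1, hr.2.1, hr.2.2⟩
  have hOutcard2 : OutP.card ≤ 2 := by
    rw [hOutPdef, Finset.card_sigma]
    exact houtsum
  -- OutP has exactly two elements, using bridgelessness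
  obtain ⟨a0, ha0D, ha0u⟩ := huD
  have hm0 : (⟨a0, u⟩ : (_ : V) × V) ∈ OutP := hmemOutP _ _ ha0D hu ha0u.symm
  have hOut2 : OutP.card = 2 := by
    have h1 : 1 ≤ OutP.card := Finset.card_pos.2 ⟨_, hm0⟩
    rcases (by omega : OutP.card = 1 ∨ OutP.card = 2) with h | h
    · exfalso
      obtain ⟨r, hr⟩ := Finset.card_eq_one.1 h
      have hma : (⟨a0, u⟩ : (_ : V) × V) = r := by
        rw [hr, Finset.mem_singleton] at hm0
        exact hm0
      apply hbridgeless s(a0, u) ((SimpleGraph.mem_edgeSet G).2 ha0u.symm)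
      rw [SimpleGraph.isBridge_iff]
      rintro ⟨W⟩
      have hclosed : ∀ p ∈ (↑D : Set V), ∀ q,
          (G \ SimpleGraph.fromEdgeSet {s(a0, u)}).Adj p q → q ∈ (↑D : Set V) := by
        intro p hp q hq
        rw [SimpleGraph.sdiff_adj, SimpleGraph.fromEdgeSet_adj] at hq
        by_contra hqD
        have hmem : (⟨p, q⟩ : (_ : V) × V) ∈ OutP :=
          hmemOutP _ _ (by simpa using hp) (by simpa using hqD) hq.1
        rw [hr, Finset.mem_singleton, ← hma] at hmem
        have hp1 : p = a0 := congrArg Sigma.fst hmem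
        have hp2 : q = u := congrArg Sigma.snd hmem
        exact hq.2 ⟨by rw [hp1, hp2]; simp, hq.1.ne⟩
      have := walk_closed hclosed W (by simpa using ha0D)
      exact hu (by simpa using this)
    · exact h
  obtain ⟨r1, r2, hr12, hOutP⟩ := Finset.card_eq_two.1 hOut2
  have hOutmem : ∀ (x w : V), x ∈ D → w ∉ D → G.Adj x w →
      (⟨x, w⟩ : (_ : V) × V) = r1 ∨ (⟨x, w⟩ : (_ : V) × V) = r2 := by
    intro x w hx hw hadj
    have := hmemOutP x w hx hw hadj
    rw [hOutP] at this
    simpa using this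
  have hr1spec := hOutspec r1 (by rw [hOutP]; simp)
  have hr2spec := hOutspec r2 (by rw [hOutP]; simp)
  -- u ≠ v
  have hne : u ≠ v := by
    intro huv
    have hsnd : ∀ r ∈ OutP, r.2 = u := by
      intro r hr
      obtain ⟨h1, h2, h3⟩ := hOutspec r hr
      rcases honly r.2 h3 ⟨r.1, h1, h2.symm⟩ with h | h
      · exact h
      · exact h.trans huv.symm
    have hu1 : r1.2 = u := hsnd r1 (by rw [hOutP]; simp)
    have hu2 : r2.2 = u := hsnd r2 (by rw [hOutP]; simp)
    set a := r1.1 with ha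
    set b := r2.1 with hb
    have haD : a ∈ D := hr1spec.1
    have hbD : b ∈ D := hr2spec.1
    have hadjau : G.Adj a u := hu1 ▸ hr1spec.2.1
    have hadjbu : G.Adj b u := hu2 ▸ hr2spec.2.1
    have hab : a ≠ b := by
      intro h
      apply hr12
      have e1 : r1 = ⟨a, u⟩ := Sigma.ext rfl (heq_of_eq hu1)
      have e2 : r2 = ⟨b, u⟩ := Sigma.ext rfl (heq_of_eq hu2)
      rw [e1, e2, h]
    have hunotf : ∀ x ∈ D, u ∉ f (idx x) := fun x _ h => hu (hfiD _ h)
    have hcrossa : ∀ y : V, G.Adj a y → y ∉ f (idx a) → y = u :=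
      fun y hy hyf => honecross' a haD y u hy hadjau hyf (hunotf a haD)
    have hcrossb : ∀ y : V, G.Adj b y → y ∉ f (idx b) → y = u :=
      fun y hy hyf => honecross' b hbD y u hy hadjbu hyf (hunotf b hbD)
    have hnab : ¬ G.Adj a b := by
      intro habadj
      by_cases hbf : b ∈ f (idx a)
      · have hdega := htipdeg a haD u hadjau (hunotf a haD)
        have hidxb : idx b = idx a := hidxu hbf
        have hdegb : ((f (idx a)).filter (G.Adj b)).card = 2 := by
          have := htipdeg b hbD u hadjbu (hunotf b hbD)
          rwa [hidxb] at this
        exact diamond_tips_nonadj (hdia (idx a)) (hidx a haD) hbf hdega hdegb habadj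
      · exact hu ((hcrossa b habadj hbf) ▸ hbD)
    -- third neighbor of u
    have hsub' : ¬ G.neighborFinset u ⊆ {a, b} := by
      intro hsub
      have h1 := Finset.card_le_card hsub
      have h2 : ({a, b} : Finset V).card ≤ 2 := Finset.card_insert_le _ _ |>.trans (by simp)
      rw [hdeg3 u] at h1
      omega
    obtain ⟨w, hw⟩ := Finset.sdiff_nonempty.2 hsub'
    rw [Finset.mem_sdiff, SimpleGraph.mem_neighborFinset, Finset.mem_insert,
      Finset.mem_singleton] at hw
    obtain ⟨hadjuw, hwab⟩ := hw
    have hwa : w ≠ a := fun h => hwab (Or.inl h)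
    have hwb : w ≠ b := fun h => hwab (Or.inr h)
    have hwD : w ∉ D := by
      intro hwD
      rcases hOutmem w u hwD hu hadjuw.symm with h | h
      · exact hwa (congrArg Sigma.fst h)
      · exact hwb (congrArg Sigma.fst h)
    have hnaw : ¬ G.Adj a w := by
      intro h
      have := hcrossa w h (fun hf => hwD (hfiD _ hf))
      exact hadjuw.ne this.symm
    have hnbw : ¬ G.Adj b w := by
      intro h
      have := hcrossb w h (fun hf => hwD (hfiD _ hf))
      exact hadjuw.ne this.symm
    exact hclaw ⟨u, a, b, w, hab, fun h => hwa h.symm, fun h => hwb h.symm,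
      hadjau.symm, hadjbu.symm, hadjuw, hnab, hnaw, hnbw⟩
  refine ⟨hne, ?_⟩
  -- now suppose u and v are adjacent
  intro hadjuv
  obtain ⟨b0, hb0D, hb0v⟩ := hvD
  have hr1' : (⟨a0, u⟩ : (_ : V) × V) = r1 ∨ (⟨a0, u⟩ : (_ : V) × V) = r2 :=
    hOutmem a0 u ha0D hu ha0u.symm
  have hr2' : (⟨b0, v⟩ : (_ : V) × V) = r1 ∨ (⟨b0, v⟩ : (_ : V) × V) = r2 :=
    hOutmem b0 v hb0D hv hb0v.symm
  -- normalize: every attachment pair is (a0,u) or (b0,v)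
  have hpairs : ∀ (x w : V), x ∈ D → w ∉ D → G.Adj x w →
      (x = a0 ∧ w = u) ∨ (x = b0 ∧ w = v) := by
    have hdiff : (⟨a0, u⟩ : (_ : V) × V) ≠ ⟨b0, v⟩ := by
      intro h
      exact hne (congrArg Sigma.snd h)
    intro x w hx hw hadj
    rcases hr1' with h1 | h1 <;> rcases hr2' with h2 | h2
    · exact absurd (h1.trans h2.symm) hdiff
    · rcases hOutmem x w hx hw hadj with h | h
      · left
        rw [← h1] at h
        exact ⟨congrArg Sigma.fst h, congrArg Sigma.snd h⟩
      · right
        rw [← h2] at h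
        exact ⟨congrArg Sigma.fst h, congrArg Sigma.snd h⟩
    · rcases hOutmem x w hx hw hadj with h | h
      · right
        rw [← h2] at h
        exact ⟨congrArg Sigma.fst h, congrArg Sigma.snd h⟩
      · left
        rw [← h1] at h
        exact ⟨congrArg Sigma.fst h, congrArg Sigma.snd h⟩
    · exact absurd (h1.trans h2.symm) hdiff
  have ha0b0 : a0 ≠ b0 := by
    intro h
    have := honecross' a0 ha0D u v ha0u.symm (h ▸ hb0v.symm)
      (fun hf => hu (hfiD _ hf)) (fun hf => hv (hfiD _ hf))
    exact hne this
  -- third neighbor t of u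
  have hadjua0 : G.Adj u a0 := ha0u
  have ha0v : a0 ≠ v := fun h => hv (h ▸ ha0D)
  have hsubu : ¬ G.neighborFinset u ⊆ {a0, v} := by
    intro hsub
    have h1 := Finset.card_le_card hsub
    have h2 : ({a0, v} : Finset V).card ≤ 2 := Finset.card_insert_le _ _ |>.trans (by simp)
    rw [hdeg3 u] at h1
    omega
  obtain ⟨t, ht⟩ := Finset.sdiff_nonempty.2 hsubu
  rw [Finset.mem_sdiff, SimpleGraph.mem_neighborFinset, Finset.mem_insert,
    Finset.mem_singleton] at ht
  obtain ⟨hadjut, htav⟩ := ht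
  have hta : t ≠ a0 := fun h => htav (Or.inl h)
  have htv : t ≠ v := fun h => htav (Or.inr h)
  have htu : t ≠ u := fun h => hadjut.ne h.symm
  have htD : t ∉ D := by
    intro htD
    rcases hpairs t u htD hu hadjut.symm with ⟨h, -⟩ | ⟨-, h⟩
    · exact hta h
    · exact hne h
  -- a0's neighbors other than those in its own diamond: only u
  have hcrossa0 : ∀ y : V, G.Adj a0 y → y ∉ D → y = u := by
    intro y hy hyD
    rcases hpairs a0 y ha0D hyD hy with ⟨-, h⟩ | ⟨h, -⟩
    · exact h
    · exact absurd h ha0b0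
  have hcrossb0 : ∀ y : V, G.Adj b0 y → y ∉ D → y = v := by
    intro y hy hyD
    rcases hpairs b0 y hb0D hyD hy with ⟨h, -⟩ | ⟨-, h⟩
    · exact absurd h.symm ha0b0
    · exact h
  have hna0v : ¬ G.Adj a0 v := fun h => hne (hcrossa0 v h hv).symm
  have hna0t : ¬ G.Adj a0 t := fun h => htu (hcrossa0 t h htD)
  -- claw at u forces v ~ t
  have hadjvt : G.Adj v t := by
    by_contra hvt
    exact hclaw ⟨u, a0, v, t, ha0v, hta.symm, htv.symm,
      hadjua0, hadjuv, hadjut, hna0v, hna0t, hvt⟩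
  -- neighbors of u are exactly {a0, v, t}
  have hNu : G.neighborFinset u = {a0, v, t} := by
    have hcard3 : ({a0, v, t} : Finset V).card = 3 := by
      rw [Finset.card_insert_of_notMem (by simp [ha0v, hta.symm]),
        Finset.card_insert_of_notMem (by simp [htv.symm]), Finset.card_singleton]
    symm
    apply Finset.eq_of_subset_of_card_le
    · intro y hy
      simp only [Finset.mem_insert, Finset.mem_singleton] at hy
      rcases hy with h | h | h <;> subst h
      · exact (SimpleGraph.mem_neighborFinset _ _ _).2 hadjua0
      · exact (SimpleGraph.mem_neighborFinset _ _ _).2 hadjuv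
      · exact (SimpleGraph.mem_neighborFinset _ _ _).2 hadjut
    · rw [hdeg3 u, hcard3]
  -- third neighbor s' of v, which must be t
  have hb0u : b0 ≠ u := fun h => hu (h ▸ hb0D)
  have hadjvb0 : G.Adj v b0 := hb0v
  have hsubv : ¬ G.neighborFinset v ⊆ {b0, u} := by
    intro hsub
    have h1 := Finset.card_le_card hsub
    have h2 : ({b0, u} : Finset V).card ≤ 2 := Finset.card_insert_le _ _ |>.trans (by simp)
    rw [hdeg3 v] at h1
    omega
  obtain ⟨s', hs'⟩ := Finset.sdiff_nonempty.2 hsubv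
  rw [Finset.mem_sdiff, SimpleGraph.mem_neighborFinset, Finset.mem_insert,
    Finset.mem_singleton] at hs'
  obtain ⟨hadjvs, hsbu⟩ := hs'
  have hsb : s' ≠ b0 := fun h => hsbu (Or.inl h)
  have hsu : s' ≠ u := fun h => hsbu (Or.inr h)
  have hsv : s' ≠ v := fun h => hadjvs.ne h.symm
  have hsD : s' ∉ D := by
    intro hsD
    rcases hpairs s' v hsD hv hadjvs.symm with ⟨-, h⟩ | ⟨h, -⟩
    · exact hne h.symm
    · exact hsb h
  have hnb0u : ¬ G.Adj b0 u := fun h => hne (hcrossb0 u h hu)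
  have hnb0s : ¬ G.Adj b0 s' := fun h => hsv (hcrossb0 s' h hsD)
  have hadjus : G.Adj u s' := by
    by_contra hus
    exact hclaw ⟨v, b0, u, s', hb0u, hsb.symm, hsu.symm,
      hadjvb0, hadjuv.symm, hadjvs, hnb0u, hnb0s, fun h => hus h⟩
  have hst : s' = t := by
    have : s' ∈ G.neighborFinset u := SimpleGraph.mem_neighborFinset _ _ _ |>.2 hadjus
    rw [hNu] at this
    simp only [Finset.mem_insert, Finset.mem_singleton] at this
    rcases this with h | h | h
    · exact absurd h (fun h => hsD (h ▸ ha0D))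
    · exact absurd h hsv
    · exact h
  have hadjvt' : G.Adj v t := hst ▸ hadjvs
  -- neighbors of v are exactly {b0, u, t}
  have hbt : b0 ≠ t := fun h => htD (h ▸ hb0D)
  have hut : u ≠ t := fun h => htu h.symm
  have hNv : G.neighborFinset v = {b0, u, t} := by
    have hcard3 : ({b0, u, t} : Finset V).card = 3 := by
      rw [Finset.card_insert_of_notMem (by simp [hb0u, hbt]),
        Finset.card_insert_of_notMem (by simp [hut]), Finset.card_singleton]
    symm
    apply Finset.eq_of_subset_of_card_le
    · intro y hy
      simp only [Finset.mem_insert, Finset.mem_singleton] at hy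
      rcases hy with h | h | h <;> subst h
      · exact (SimpleGraph.mem_neighborFinset _ _ _).2 hadjvb0
      · exact (SimpleGraph.mem_neighborFinset _ _ _).2 hadjuv.symm
      · exact (SimpleGraph.mem_neighborFinset _ _ _).2 hadjvt'
    · rw [hdeg3 v, hcard3]
  -- third neighbor z of t
  have hsubt : ¬ G.neighborFinset t ⊆ {u, v} := by
    intro hsub
    have h1 := Finset.card_le_card hsub
    have h2 : ({u, v} : Finset V).card ≤ 2 := Finset.card_insert_le _ _ |>.trans (by simp)
    rw [hdeg3 t] at h1
    omega
  obtain ⟨z, hz⟩ := Finset.sdiff_nonempty.2 hsubt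
  rw [Finset.mem_sdiff, SimpleGraph.mem_neighborFinset, Finset.mem_insert,
    Finset.mem_singleton] at hz
  obtain ⟨hadjtz, hzuv⟩ := hz
  have hzu : z ≠ u := fun h => hzuv (Or.inl h)
  have hzv : z ≠ v := fun h => hzuv (Or.inr h)
  have hzt : z ≠ t := fun h => hadjtz.ne h.symm
  have hzD : z ∉ D := by
    intro hzD
    rcases hpairs z t hzD htD hadjtz.symm with ⟨-, h⟩ | ⟨-, h⟩
    · exact htu h
    · exact htv h
  have hNt : G.neighborFinset t = {u, v, z} := by
    have hcard3 : ({u, v, z} : Finset V).card = 3 := by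
      rw [Finset.card_insert_of_notMem (by simp [hne, hzu.symm]),
        Finset.card_insert_of_notMem (by simp [hzv.symm]), Finset.card_singleton]
    symm
    apply Finset.eq_of_subset_of_card_le
    · intro y hy
      simp only [Finset.mem_insert, Finset.mem_singleton] at hy
      rcases hy with h | h | h <;> subst h
      · exact (SimpleGraph.mem_neighborFinset _ _ _).2 hadjut.symm
      · exact (SimpleGraph.mem_neighborFinset _ _ _).2 hadjvt'.symm
      · exact (SimpleGraph.mem_neighborFinset _ _ _).2 hadjtz
    · rw [hdeg3 t, hcard3]
  -- the edge t-z is a bridge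
  apply hbridgeless s(t, z) ((SimpleGraph.mem_edgeSet G).2 hadjtz)
  rw [SimpleGraph.isBridge_iff]
  rintro ⟨W⟩
  set S : Set V := (↑D : Set V) ∪ {u, v, t} with hSdef
  have hclosed : ∀ p ∈ S, ∀ q, (G \ SimpleGraph.fromEdgeSet {s(t, z)}).Adj p q → q ∈ S := by
    intro p hp q hq
    rw [SimpleGraph.sdiff_adj, SimpleGraph.fromEdgeSet_adj] at hq
    obtain ⟨hadjpq, hnedge⟩ := hq
    have hqmem : ∀ x : V, q = x → x ∈ S → q ∈ S := fun x h hx => h ▸ hx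
    rcases hp with hpD | hpuvt
    · by_cases hqD : q ∈ D
      · exact Or.inl hqD
      · rcases hpairs p q (by simpa using hpD) hqD hadjpq with ⟨-, h⟩ | ⟨-, h⟩
        · right; rw [h]; simp
        · right; rw [h]; simp
    · simp only [Set.mem_insert_iff, Set.mem_singleton_iff] at hpuvt
      rcases hpuvt with h | h | h
      · subst h
        have : q ∈ G.neighborFinset p := SimpleGraph.mem_neighborFinset _ _ _ |>.2 hadjpq
        rw [hNu] at this
        simp only [Finset.mem_insert, Finset.mem_singleton] at this
        rcases this with h | h | h
        · exact Or.inl (by rw [h]; exact ha0D)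
        · right; rw [h]; simp
        · right; rw [h]; simp
      · subst h
        have : q ∈ G.neighborFinset p := SimpleGraph.mem_neighborFinset _ _ _ |>.2 hadjpq
        rw [hNv] at this
        simp only [Finset.mem_insert, Finset.mem_singleton] at this
        rcases this with h | h | h
        · exact Or.inl (by rw [h]; exact hb0D)
        · right; rw [h]; simp
        · right; rw [h]; simp
      · subst h
        have : q ∈ G.neighborFinset p := SimpleGraph.mem_neighborFinset _ _ _ |>.2 hadjpq
        rw [hNt] at this
        simp only [Finset.mem_insert, Finset.mem_singleton] at this
        rcases this with h | h | h
        · right; rw [h]; simp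
        · right; rw [h]; simp
        · exfalso
          exact hnedge ⟨by rw [h]; simp, hadjpq.ne⟩
  have hzS := walk_closed hclosed W (Or.inr (by simp))
  rcases hzS with h | h
  · exact hzD (by simpa using h)
  · simp only [Set.mem_insert_iff, Set.mem_singleton_iff] at h
    rcases h with h | h | h
    · exact hzu h
    · exact hzv h
    · exact hzt h
end

section
/- Every 3-edge-connected claw-free cubic graph on n vertices that is not isomorphic to K_4 has exactly 2^{n/6+1} perfect matchings. -/
/-- A graph is 3-edge-connected if it is connected and remains connected after
deleting any two edges. -/
def ThreeEdgeConnected {V : Type*} (G : SimpleGraph V) : Prop :=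
  ∀ s : Set (Sym2 V), s.ncard ≤ 2 → (G.deleteEdges s).Connected

namespace CFC
open SimpleGraph Finset
set_option linter.unusedSectionVars false

variable {V : Type*} [Fintype V] {G : SimpleGraph V} [DecidableRel G.Adj]

lemma walk_closed {G' : SimpleGraph V} {D : Set V}
    (hD : ∀ u ∈ D, ∀ w, G'.Adj u w → w ∈ D) :
    ∀ {v x : V}, G'.Walk v x → v ∈ D → x ∈ D := by
  intro v x w
  induction w with
  | nil => exact id
  | cons h p ih => exact fun hv => ih (hD _ hv _ h)

lemma conn (h3ec : ThreeEdgeConnected G) : G.Connected := by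
  have := h3ec ∅ (by simp)
  simpa [SimpleGraph.deleteEdges_empty] using this

lemma nbhd (hcubic : ∀ v : V, G.degree v = 3) (v : V) :
    ∃ a b c : V, a ≠ b ∧ a ≠ c ∧ b ≠ c ∧ G.Adj v a ∧ G.Adj v b ∧ G.Adj v c ∧
      (∀ w, G.Adj v w → w = a ∨ w = b ∨ w = c) := by
  classical
  have h : (G.neighborFinset v).card = 3 := hcubic v
  rw [Finset.card_eq_three] at h
  obtain ⟨a, b, c, h1, h2, h3, h4⟩ := h
  refine ⟨a, b, c, h1, h2, h3, ?_, ?_, ?_, ?_⟩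
  · rw [← SimpleGraph.mem_neighborFinset, h4]; simp
  · rw [← SimpleGraph.mem_neighborFinset, h4]; simp
  · rw [← SimpleGraph.mem_neighborFinset, h4]; simp
  · intro w hw
    rw [← SimpleGraph.mem_neighborFinset, h4] at hw
    simpa using hw

lemma adj_mem (hcubic : ∀ v : V, G.degree v = 3) {u p q r w : V}
    (hpq : p ≠ q) (hpr : p ≠ r) (hqr : q ≠ r)
    (h1 : G.Adj u p) (h2 : G.Adj u q) (h3 : G.Adj u r) (hw : G.Adj u w) :
    w = p ∨ w = q ∨ w = r := by
  classical
  have hsub : ({p, q, r} : Finset V) ⊆ G.neighborFinset u := by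
    intro x hx
    simp only [Finset.mem_insert, Finset.mem_singleton] at hx
    rcases hx with rfl | rfl | rfl <;> rwa [SimpleGraph.mem_neighborFinset]
  have hcard : (G.neighborFinset u).card ≤ ({p, q, r} : Finset V).card := by
    rw [Finset.card_insert_of_notMem (by simp [hpq, hpr]),
      Finset.card_insert_of_notMem (by simp [hqr]), Finset.card_singleton]
    exact le_of_eq (hcubic u)
  have heq := Finset.eq_of_subset_of_card_le hsub hcard
  have hmem : w ∈ G.neighborFinset u := by rwa [SimpleGraph.mem_neighborFinset]
  rw [← heq] at hmem
  simpa using hmem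

/-- the K4 case: if four vertices are mutually adjacent, contradiction. -/
lemma K4_false (h3ec : ThreeEdgeConnected G)
    (hcubic : ∀ v : V, G.degree v = 3)
    (hnotK4 : ¬ Nonempty (G ≃g completeGraph (Fin 4)))
    {v a b c : V} (hab : a ≠ b) (hac : a ≠ c) (hbc : b ≠ c)
    (hva : G.Adj v a) (hvb : G.Adj v b) (hvc : G.Adj v c)
    (e1 : G.Adj a b) (e2 : G.Adj a c) (e3 : G.Adj b c) : False := by
  classical
  have hva' : v ≠ a := G.ne_of_adj hva
  have hvb' : v ≠ b := G.ne_of_adj hvb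
  have hvc' : v ≠ c := G.ne_of_adj hvc
  have hclosed : ∀ u ∈ ({v, a, b, c} : Set V), ∀ w, G.Adj u w → w ∈ ({v, a, b, c} : Set V) := by
    intro u hu w hw
    simp only [Set.mem_insert_iff, Set.mem_singleton_iff] at hu ⊢
    rcases hu with rfl | rfl | rfl | rfl
    · rcases adj_mem hcubic hab hac hbc hva hvb hvc hw with rfl | rfl | rfl <;> tauto
    · rcases adj_mem hcubic hvb' hvc' hbc hva.symm e1 e2 hw with rfl | rfl | rfl <;> tauto
    · rcases adj_mem hcubic hva' hvc' hac hvb.symm e1.symm e3 hw with rfl | rfl | rfl <;> tauto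
    · rcases adj_mem hcubic hva' hvb' hab hvc.symm e2.symm e3.symm hw with rfl | rfl | rfl <;> tauto
  have huniv : ∀ x : V, x ∈ ({v, a, b, c} : Set V) := by
    intro x
    obtain ⟨w⟩ := ((conn h3ec).preconnected v x)
    exact walk_closed hclosed w (by simp)
  have hfin : (Finset.univ : Finset V) = {v, a, b, c} := by
    apply Finset.eq_of_subset_of_card_le
    · intro x _
      have := huniv x
      simp only [Set.mem_insert_iff, Set.mem_singleton_iff] at this
      simpa using this
    · exact Finset.card_le_card (Finset.subset_univ _)
  have hcard : Fintype.card V = 4 := by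
    rw [← Finset.card_univ, hfin]
    rw [Finset.card_insert_of_notMem (by simp [hva', hvb', hvc']),
      Finset.card_insert_of_notMem (by simp [hab, hac]),
      Finset.card_insert_of_notMem (by simp [hbc]), Finset.card_singleton]
  have hG : G = ⊤ := by
    ext x y
    simp only [SimpleGraph.top_adj]
    constructor
    · exact fun h => G.ne_of_adj h
    · intro hxy
      have hx := huniv x
      have hy := huniv y
      simp only [Set.mem_insert_iff, Set.mem_singleton_iff] at hx hy
      have hva2 := hva.symm; have hvb2 := hvb.symm; have hvc2 := hvc.symm
      have e12 := e1.symm; have e22 := e2.symm; have e32 := e3.symm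
      rcases hx with rfl | rfl | rfl | rfl <;> rcases hy with rfl | rfl | rfl | rfl <;>
        first | exact absurd rfl hxy | assumption
  have e' : G ≃g (⊤ : SimpleGraph V) := by rw [hG]
  exact hnotK4 ⟨e'.trans (SimpleGraph.Iso.completeGraph (Fintype.equivFinOfCardEq hcard))⟩

/-- third neighbor distinct from two given ones -/
lemma third_nbr (hcubic : ∀ v : V, G.degree v = 3) {u p q : V}
    (hpq : p ≠ q) (h1 : G.Adj u p) (h2 : G.Adj u q) :
    ∃ x, G.Adj u x ∧ x ≠ p ∧ x ≠ q := by
  obtain ⟨a, b, c, h1', h2', h3', ha, hb, hc, hcov⟩ := nbhd hcubic u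
  rcases hcov p h1 with rfl | rfl | rfl <;> rcases hcov q h2 with rfl | rfl | rfl <;>
    first
      | exact absurd rfl hpq
      | exact ⟨a, ha, by tauto⟩
      | exact ⟨b, hb, by tauto⟩
      | exact ⟨c, hc, by tauto⟩

lemma two_edges_false (h3ec : ThreeEdgeConnected G)
    (hcubic : ∀ v : V, G.degree v = 3)
    (hnotK4 : ¬ Nonempty (G ≃g completeGraph (Fin 4)))
    {v a b c : V} (hab : a ≠ b) (hac : a ≠ c) (hbc : b ≠ c)
    (hva : G.Adj v a) (hvb : G.Adj v b) (hvc : G.Adj v c)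
    (e1 : G.Adj a b) (e2 : G.Adj a c) : False := by
  classical
  have hva' : v ≠ a := G.ne_of_adj hva
  have hvb' : v ≠ b := G.ne_of_adj hvb
  have hvc' : v ≠ c := G.ne_of_adj hvc
  by_cases e3 : G.Adj b c
  · exact K4_false h3ec hcubic hnotK4 hab hac hbc hva hvb hvc e1 e2 e3
  -- diamond case: v, a both adjacent to b and c, edge v-a, non-edge b-c
  obtain ⟨x, hbx, hxv, hxa⟩ := third_nbr hcubic hva' hvb.symm e1.symm
  obtain ⟨y, hcy, hyv, hya⟩ := third_nbr hcubic hva' hvc.symm e2.symm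
  have hxb : x ≠ b := fun h => G.irrefl (h ▸ hbx)
  have hxc : x ≠ c := fun h => e3 (h ▸ hbx)
  have hyc : y ≠ c := fun h => G.irrefl (h ▸ hcy)
  have hyb : y ≠ b := fun h => e3 ((h ▸ hcy).symm)
  set s : Set (Sym2 V) := {s(b, x), s(c, y)} with hs
  have hs2 : s.ncard ≤ 2 := le_trans (Set.ncard_insert_le _ _) (by simp)
  have hconn' := h3ec s hs2
  have hdel : ∀ u w, (G.deleteEdges s).Adj u w → G.Adj u w ∧ ¬ s(u, w) ∈ s := by
    intro u w h
    rwa [SimpleGraph.deleteEdges_adj] at h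
  have hclosed : ∀ u ∈ ({v, a, b, c} : Set V), ∀ w,
      (G.deleteEdges s).Adj u w → w ∈ ({v, a, b, c} : Set V) := by
    intro u hu w hw
    obtain ⟨hadj, hns⟩ := hdel u w hw
    simp only [Set.mem_insert_iff, Set.mem_singleton_iff] at hu ⊢
    rcases hu with rfl | rfl | rfl | rfl
    · rcases adj_mem hcubic hab hac hbc hva hvb hvc hadj with rfl | rfl | rfl <;> tauto
    · rcases adj_mem hcubic hvb' hvc' hbc hva.symm e1 e2 hadj with rfl | rfl | rfl <;> tauto
    · rcases adj_mem hcubic hva' (Ne.symm hxv) (Ne.symm hxa) hvb.symm e1.symm hbx hadj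
        with rfl | rfl | rfl
      · tauto
      · tauto
      · exfalso; exact hns (by simp [hs])
    · rcases adj_mem hcubic hva' (Ne.symm hyv) (Ne.symm hya) hvc.symm e2.symm hcy hadj
        with rfl | rfl | rfl
      · tauto
      · tauto
      · exfalso; exact hns (by simp [hs])
  have hxD : x ∈ ({v, a, b, c} : Set V) := by
    obtain ⟨w⟩ := (hconn'.preconnected v x)
    exact walk_closed hclosed w (by simp)
  simp only [Set.mem_insert_iff, Set.mem_singleton_iff] at hxD
  tauto


/-- Each vertex has a unique triangle: its neighborhood is `{a,b,c}` with exactly the edge `ab`. -/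
lemma tri (h3ec : ThreeEdgeConnected G) (hclaw : ClawFree G)
    (hcubic : ∀ v : V, G.degree v = 3)
    (hnotK4 : ¬ Nonempty (G ≃g completeGraph (Fin 4))) (v : V) :
    ∃ a b c : V, a ≠ b ∧ a ≠ c ∧ b ≠ c ∧ G.Adj v a ∧ G.Adj v b ∧ G.Adj v c ∧
      G.Adj a b ∧ ¬ G.Adj a c ∧ ¬ G.Adj b c ∧
      (∀ w, G.Adj v w → w = a ∨ w = b ∨ w = c) := by
  obtain ⟨a, b, c, hab, hac, hbc, ha, hb, hc, hcov⟩ := nbhd hcubic v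
  have hone : G.Adj a b ∨ G.Adj a c ∨ G.Adj b c := by
    by_contra h
    push_neg at h
    exact hclaw ⟨v, a, b, c, hab, hac, hbc, ha, hb, hc, h.1, h.2.1, h.2.2⟩
  rcases hone with e | e | e
  · refine ⟨a, b, c, hab, hac, hbc, ha, hb, hc, e, ?_, ?_, hcov⟩
    · exact fun e2 => two_edges_false h3ec hcubic hnotK4 hab hac hbc ha hb hc e e2
    · exact fun e2 => two_edges_false h3ec hcubic hnotK4 (Ne.symm hab) hbc hac hb ha hc e.symm e2
  · refine ⟨a, c, b, hac, hab, Ne.symm hbc, ha, hc, hb, e, ?_, ?_, fun w hw => by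
      rcases hcov w hw with h | h | h <;> tauto⟩
    · exact fun e2 => two_edges_false h3ec hcubic hnotK4 hac hab (Ne.symm hbc) ha hc hb e e2
    · exact fun e2 => two_edges_false h3ec hcubic hnotK4 (Ne.symm hac) (Ne.symm hbc) hab hc ha hb
        e.symm e2
  · refine ⟨b, c, a, hbc, Ne.symm hab, Ne.symm hac, hb, hc, ha, e, ?_, ?_, fun w hw => by
      rcases hcov w hw with h | h | h <;> tauto⟩
    · exact fun e2 => two_edges_false h3ec hcubic hnotK4 hbc (Ne.symm hab) (Ne.symm hac) hb hc ha
        e e2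
    · exact fun e2 => two_edges_false h3ec hcubic hnotK4 (Ne.symm hbc) (Ne.symm hac) (Ne.symm hab)
        hc hb ha e.symm e2

/-- Two vertices are related if they are equal or belong to a common triangle. -/
def Rel (G : SimpleGraph V) (v w : V) : Prop :=
  v = w ∨ (G.Adj v w ∧ ∃ u, G.Adj v u ∧ G.Adj w u)

lemma rel_refl : ∀ v, Rel G v v := fun v => Or.inl rfl

lemma rel_symm : ∀ {v w}, Rel G v w → Rel G w v := by
  rintro v w (rfl | ⟨h, u, h1, h2⟩)
  · exact Or.inl rfl
  · exact Or.inr ⟨h.symm, u, h2, h1⟩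

section WithHyps

variable (h3ec : ThreeEdgeConnected G) (hclaw : ClawFree G)
    (hcubic : ∀ v : V, G.degree v = 3)
    (hnotK4 : ¬ Nonempty (G ≃g completeGraph (Fin 4)))

include h3ec hclaw hcubic hnotK4

/-- characterization of the class of `v` in terms of its triangle. -/
lemma rel_iff {v a b c : V} (hab : a ≠ b) (hac : a ≠ c) (hbc : b ≠ c)
    (ha : G.Adj v a) (hb : G.Adj v b) (hc : G.Adj v c)
    (e : G.Adj a b) (ne1 : ¬ G.Adj a c) (ne2 : ¬ G.Adj b c)
    (hcov : ∀ w, G.Adj v w → w = a ∨ w = b ∨ w = c) :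
    ∀ w, Rel G v w ↔ (w = v ∨ w = a ∨ w = b) := by
  intro w
  constructor
  · rintro (rfl | ⟨hadj, u, h1, h2⟩)
    · exact Or.inl rfl
    · rcases hcov w hadj with rfl | rfl | rfl
      · exact Or.inr (Or.inl rfl)
      · exact Or.inr (Or.inr rfl)
      · -- w = c : common neighbor u of v and c must be a or b, contradiction
        exfalso
        rcases hcov u h1 with rfl | rfl | rfl
        · exact ne1 h2.symm
        · exact ne2 h2.symm
        · exact G.irrefl h2
  · rintro (rfl | rfl | rfl)
    · exact Or.inl rfl
    · exact Or.inr ⟨ha, b, hb, e⟩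
    · exact Or.inr ⟨hb, a, ha, e.symm⟩

lemma rel_trans : ∀ {v w z}, Rel G v w → Rel G w z → Rel G v z := by
  rintro v w z (rfl | ⟨hvw, u, hu1, hu2⟩) h2
  · exact h2
  rcases h2 with rfl | ⟨hwz, u', hu1', hu2'⟩
  · exact Or.inr ⟨hvw, u, hu1, hu2⟩
  by_cases hvz : v = z
  · exact Or.inl hvz
  -- nontrivial: v-w in triangle with u; w-z in triangle with u'
  by_cases huz : u = z
  · subst huz
    exact Or.inr ⟨hu1, w, hvw, hu2.symm⟩
  by_cases huv : u' = v
  · subst huv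
    exact Or.inr ⟨hu2'.symm, w, hvw, hwz.symm⟩
  by_cases huu : u = u'
  · subst huu
    -- u is adjacent to v, w, z with edges vw and wz among its neighbors: impossible
    exfalso
    have h1 : G.Adj u w := hu2.symm
    have h2 : G.Adj u v := hu1.symm
    have h3 : G.Adj u z := hu2'.symm
    exact two_edges_false h3ec hcubic hnotK4 (G.ne_of_adj hvw).symm
      (fun h => (G.ne_of_adj hwz) h) hvz h1 h2 h3 hvw.symm hwz
  · -- all of v, u, z, u' distinct neighbors of w: contradicts degree 3
    exfalso
    classical
    have m1 : G.Adj w v := hvw.symm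
    have m2 : G.Adj w u := hu2
    have m3 : G.Adj w z := hwz
    have m4 : G.Adj w u' := hu1'
    have d1 : v ≠ u := G.ne_of_adj hu1
    have d3 : z ≠ u' := G.ne_of_adj hu2'
    rcases adj_mem hcubic d1 hvz huz m1 m2 m3 m4 with rfl | rfl | rfl
    · exact huv rfl
    · exact huu rfl
    · exact d3 rfl

end WithHyps


/-- `v` and `w` are joined by an external (non-triangle) edge. -/
def Ext (G : SimpleGraph V) (v w : V) : Prop := G.Adj v w ∧ ¬ Rel G v w

noncomputable instance : DecidableEq (Quot (Rel G)) := Classical.decEq _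
noncomputable instance : DecidableEq (Quot (Ext G)) := Classical.decEq _

lemma ext_symm {v w : V} (h : Ext G v w) : Ext G w v :=
  ⟨h.1.symm, fun hr => h.2 (rel_symm hr)⟩

lemma adj_cases {u w : V} (h : G.Adj u w) : Rel G u w ∨ Ext G u w := by
  by_cases hr : Rel G u w
  · exact Or.inl hr
  · exact Or.inr ⟨h, hr⟩

section WithHyps2

variable (h3ec : ThreeEdgeConnected G) (hclaw : ClawFree G)
    (hcubic : ∀ v : V, G.degree v = 3)
    (hnotK4 : ¬ Nonempty (G ≃g completeGraph (Fin 4)))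

include h3ec hclaw hcubic hnotK4

lemma rel_equiv : Equivalence (Rel G) :=
  ⟨rel_refl, rel_symm, rel_trans h3ec hclaw hcubic hnotK4⟩

/-- The full triangle data of a vertex. -/
lemma triangle_data (v : V) : ∃ a b c : V,
    v ≠ a ∧ v ≠ b ∧ v ≠ c ∧ a ≠ b ∧ a ≠ c ∧ b ≠ c ∧
    G.Adj v a ∧ G.Adj v b ∧ G.Adj a b ∧ Ext G v c ∧
    (∀ w, Rel G v w ↔ (w = v ∨ w = a ∨ w = b)) ∧
    (∀ w, Ext G v w → w = c) := by
  obtain ⟨a, b, c, hab, hac, hbc, ha, hb, hc, e, ne1, ne2, hcov⟩ :=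
    tri h3ec hclaw hcubic hnotK4 v
  have hiff := rel_iff h3ec hclaw hcubic hnotK4 hab hac hbc ha hb hc e ne1 ne2 hcov
  have hvc : v ≠ c := G.ne_of_adj hc
  have hextc : Ext G v c := by
    refine ⟨hc, fun hr => ?_⟩
    rcases (hiff c).mp hr with h | h | h
    · exact hvc h.symm
    · exact hac h.symm
    · exact hbc h.symm
  refine ⟨a, b, c, G.ne_of_adj ha, G.ne_of_adj hb, hvc, hab, hac, hbc, ha, hb, e, hextc,
    hiff, ?_⟩
  intro w hw
  rcases hcov w hw.1 with rfl | rfl | rfl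
  · exact absurd ((hiff w).mpr (Or.inr (Or.inl rfl))) hw.2
  · exact absurd ((hiff w).mpr (Or.inr (Or.inr rfl))) hw.2
  · rfl

lemma ext_partner (v : V) : ∃ c, Ext G v c ∧ ∀ w, Ext G v w → w = c := by
  obtain ⟨a, b, c, _, _, _, _, _, _, _, _, _, hc, _, huniq⟩ :=
    triangle_data h3ec hclaw hcubic hnotK4 v
  exact ⟨c, hc, huniq⟩

lemma ext_unique {u w w' : V} (h1 : Ext G u w) (h2 : Ext G u w') : w = w' := by
  obtain ⟨c, _, huniq⟩ := ext_partner h3ec hclaw hcubic hnotK4 u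
  rw [huniq w h1, huniq w' h2]

lemma tq_mk_eq {v w : V} :
    Quot.mk (Rel G) v = Quot.mk (Rel G) w ↔ Rel G v w := by
  rw [Quot.eq]
  exact (rel_equiv h3ec hclaw hcubic hnotK4).eqvGen_iff

lemma qq_mk_eq {v w : V} :
    Quot.mk (Ext G) v = Quot.mk (Ext G) w ↔ (v = w ∨ Ext G v w) := by
  rw [Quot.eq]
  have hequiv : Equivalence (fun v w => v = w ∨ Ext G v w) := by
    constructor
    · exact fun _ => Or.inl rfl
    · rintro x y (rfl | h)
      · exact Or.inl rfl
      · exact Or.inr (ext_symm h)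
    · rintro x y z (rfl | h1) h2
      · exact h2
      · rcases h2 with rfl | h2
        · exact Or.inr h1
        · exact Or.inl (ext_unique h3ec hclaw hcubic hnotK4 (ext_symm h1) h2)
  constructor
  · intro h
    induction h with
    | rel x y h => exact Or.inr h
    | refl x => exact Or.inl rfl
    | symm x y _ ih => exact hequiv.symm ih
    | trans x y z _ _ ih1 ih2 => exact hequiv.trans ih1 ih2
  · rintro (rfl | h)
    · exact Relation.EqvGen.refl _
    · exact Relation.EqvGen.rel _ _ h

/-- Summing a function over the triangle class of `v`. -/
lemma tri_sum (v : V) : ∃ a b : V,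
    v ≠ a ∧ v ≠ b ∧ a ≠ b ∧ G.Adj v a ∧ G.Adj v b ∧ G.Adj a b ∧
    (∀ w, Rel G v w ↔ (w = v ∨ w = a ∨ w = b)) ∧
    (∀ {M : Type} [AddCommMonoid M] (g : V → M),
      ∑ w : V, (if Quot.mk (Rel G) w = Quot.mk (Rel G) v then g w else 0) = g v + g a + g b) := by
  obtain ⟨a, b, c, hva, hvb, hvc, hab, hac, hbc, ha, hb, e, hextc, hiff, huniq⟩ :=
    triangle_data h3ec hclaw hcubic hnotK4 v
  refine ⟨a, b, hva, hvb, hab, ha, hb, e, hiff, ?_⟩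
  intro M _ g
  classical
  have hfil : (Finset.univ.filter
      (fun w => Quot.mk (Rel G) w = Quot.mk (Rel G) v)) = {v, a, b} := by
    ext w
    simp only [Finset.mem_filter, Finset.mem_univ, true_and, Finset.mem_insert,
      Finset.mem_singleton]
    rw [tq_mk_eq h3ec hclaw hcubic hnotK4]
    constructor
    · intro h; exact (hiff w).mp (rel_symm h)
    · intro h; exact rel_symm ((hiff w).mpr h)
  rw [← Finset.sum_filter, hfil, Finset.sum_insert (by simp [hva, hvb]),
    Finset.sum_insert (by simp [hab]), Finset.sum_singleton, add_assoc]

/-- Summing a function over the external-edge class of `v`. -/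
lemma ext_sum (v : V) : ∃ c : V, Ext G v c ∧
    (∀ {M : Type} [AddCommMonoid M] (g : V → M),
      ∑ w : V, (if Quot.mk (Ext G) w = Quot.mk (Ext G) v then g w else 0) = g v + g c) := by
  obtain ⟨c, hc, huniq⟩ := ext_partner h3ec hclaw hcubic hnotK4 v
  refine ⟨c, hc, ?_⟩
  intro M _ g
  classical
  have hfil : (Finset.univ.filter
      (fun w => Quot.mk (Ext G) w = Quot.mk (Ext G) v)) = {v, c} := by
    ext w
    simp only [Finset.mem_filter, Finset.mem_univ, true_and, Finset.mem_insert,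
      Finset.mem_singleton]
    rw [qq_mk_eq h3ec hclaw hcubic hnotK4]
    constructor
    · rintro (rfl | h)
      · exact Or.inl rfl
      · exact Or.inr (huniq w (ext_symm h))
    · rintro (rfl | rfl)
      · exact Or.inl rfl
      · exact Or.inr (ext_symm hc)
  rw [← Finset.sum_filter, hfil, Finset.sum_pair (G.ne_of_adj hc.1)]

lemma card_tq : Fintype.card V = 3 * Nat.card (Quot (Rel G)) := by
  classical
  letI : Fintype (Quot (Rel G)) := Fintype.ofFinite _
  rw [Nat.card_eq_fintype_card, ← Finset.card_univ]
  rw [Finset.card_eq_sum_card_fiberwise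
    (f := Quot.mk (Rel G)) (t := Finset.univ) (fun x _ => Finset.mem_univ _)]
  have : ∀ t : Quot (Rel G),
      (Finset.univ.filter (fun w => Quot.mk (Rel G) w = t)).card = 3 := by
    intro t
    obtain ⟨v, rfl⟩ := Quot.exists_rep t
    obtain ⟨a, b, _, _, _, _, _, _, _, hsum⟩ := tri_sum h3ec hclaw hcubic hnotK4 v
    rw [Finset.card_filter]
    rw [hsum (fun _ => 1)]
  rw [Finset.sum_congr rfl (fun t _ => this t), Finset.sum_const, Finset.card_univ,
    smul_eq_mul, mul_comm]

lemma card_qq : Fintype.card V = 2 * Nat.card (Quot (Ext G)) := by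
  classical
  letI : Fintype (Quot (Ext G)) := Fintype.ofFinite _
  rw [Nat.card_eq_fintype_card, ← Finset.card_univ]
  rw [Finset.card_eq_sum_card_fiberwise
    (f := Quot.mk (Ext G)) (t := Finset.univ) (fun x _ => Finset.mem_univ _)]
  have : ∀ t : Quot (Ext G),
      (Finset.univ.filter (fun w => Quot.mk (Ext G) w = t)).card = 2 := by
    intro t
    obtain ⟨v, rfl⟩ := Quot.exists_rep t
    obtain ⟨c, _, hsum⟩ := ext_sum h3ec hclaw hcubic hnotK4 v
    rw [Finset.card_filter]
    rw [hsum (fun _ => 1)]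
  rw [Finset.sum_congr rfl (fun t _ => this t), Finset.sum_const, Finset.card_univ,
    smul_eq_mul, mul_comm]

end WithHyps2


noncomputable instance instFintypeTQ : Fintype (Quot (Rel G)) := Fintype.ofFinite _
noncomputable instance instFintypeQQ : Fintype (Quot (Ext G)) := Fintype.ofFinite _

/-- The boundary map: a vector of external edges goes to the parity of each triangle. -/
noncomputable def phi (G : SimpleGraph V) :
    ((Quot (Ext G)) → ZMod 2) →ₗ[ZMod 2] ((Quot (Rel G)) → ZMod 2) where
  toFun x := fun t => ∑ v : V, if Quot.mk (Rel G) v = t then x (Quot.mk (Ext G) v) else 0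
  map_add' x y := by
    funext t
    simp only [Pi.add_apply]
    rw [← Finset.sum_add_distrib]
    refine Finset.sum_congr rfl fun v _ => ?_
    split <;> simp
  map_smul' m x := by
    funext t
    simp only [RingHom.id_apply, Pi.smul_apply, Finset.smul_sum]
    refine Finset.sum_congr rfl fun v _ => ?_
    split <;> simp

lemma phi_apply (G : SimpleGraph V) (x : (Quot (Ext G)) → ZMod 2) (t : Quot (Rel G)) :
    phi G x t = ∑ v : V, if Quot.mk (Rel G) v = t then x (Quot.mk (Ext G) v) else 0 := rfl

noncomputable def sumF (G : SimpleGraph V) :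
    ((Quot (Rel G)) → ZMod 2) →ₗ[ZMod 2] ZMod 2 where
  toFun y := ∑ t, y t
  map_add' x y := by simp [Finset.sum_add_distrib]
  map_smul' m x := by simp [Finset.mul_sum]

section WithHyps3

variable (h3ec : ThreeEdgeConnected G) (hclaw : ClawFree G)
    (hcubic : ∀ v : V, G.degree v = 3)
    (hnotK4 : ¬ Nonempty (G ≃g completeGraph (Fin 4)))

include h3ec hclaw hcubic hnotK4

lemma phi_single {v u : V} (h : Ext G v u) :
    phi G (Pi.single (Quot.mk (Ext G) v) 1) =
      Pi.single (Quot.mk (Rel G) v) 1 + Pi.single (Quot.mk (Rel G) u) 1 := by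
  have hmemQ : ∀ w, Quot.mk (Ext G) w = Quot.mk (Ext G) v ↔ (w = v ∨ w = u) := by
    intro w
    rw [qq_mk_eq h3ec hclaw hcubic hnotK4]
    constructor
    · rintro (rfl | hw)
      · exact Or.inl rfl
      · exact Or.inr (ext_unique h3ec hclaw hcubic hnotK4 (ext_symm hw) h)
    · rintro (rfl | rfl)
      · exact Or.inl rfl
      · exact Or.inr (ext_symm h)
  have hvu : ¬ Rel G v u := h.2
  funext t
  obtain ⟨z, rfl⟩ := Quot.exists_rep t
  obtain ⟨a, b, hza, hzb, hab, hadjza, hadjzb, hadjab, hiffz, hsum⟩ :=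
    tri_sum h3ec hclaw hcubic hnotK4 z
  rw [phi_apply]
  have hs := hsum (fun w => (Pi.single (M := fun _ => ZMod 2) (Quot.mk (Ext G) v) 1 (Quot.mk (Ext G) w)))
  beta_reduce at hs
  rw [hs]
  classical
  have iteq : ∀ {p q : Prop} [Decidable p] [Decidable q], (p ↔ q) →
      ((if p then (1 : ZMod 2) else 0) = if q then 1 else 0) := by
    intro p q _ _ hpq
    by_cases hp : p
    · rw [if_pos hp, if_pos (hpq.mp hp)]
    · rw [if_neg hp, if_neg (fun hq => hp (hpq.mpr hq))]
  simp only [Pi.add_apply, Pi.single_apply]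
  rw [iteq (hmemQ z), iteq (hmemQ a), iteq (hmemQ b),
    iteq (tq_mk_eq h3ec hclaw hcubic hnotK4), iteq (tq_mk_eq h3ec hclaw hcubic hnotK4)]
  -- now everything is in terms of pure logic about Rel and equalities
  have hiffz' := hiffz
  by_cases hzv : Rel G z v <;> by_cases hzu : Rel G z u
  · exact absurd (rel_trans h3ec hclaw hcubic hnotK4 (rel_symm hzv) hzu) hvu
  · -- v is in the class of z, u is not
    have hvm : v = z ∨ v = a ∨ v = b := (hiffz v).mp hzv
    have hum : ∀ w, Rel G z w → w ≠ u := fun w hw he => hzu (he ▸ hw)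
    have hau : a ≠ u := hum a ((hiffz a).mpr (Or.inr (Or.inl rfl)))
    have hbu : b ≠ u := hum b ((hiffz b).mpr (Or.inr (Or.inr rfl)))
    have hzu' : z ≠ u := hum z (rel_refl z)
    rcases hvm with rfl | rfl | rfl
    · simp [hza, hzb, hau, hbu, hzu', Ne.symm hza, Ne.symm hzb, hzv, hzu]
    · simp [hza, hab, hau, hbu, hzu', Ne.symm hab, hzv, hzu]
    · simp [hzb, hab, hau, hbu, hzu', hzv, hzu]
  · -- u is in the class of z, v is not
    have hvm : u = z ∨ u = a ∨ u = b := (hiffz u).mp hzu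
    have hum : ∀ w, Rel G z w → w ≠ v := fun w hw he => hzv (he ▸ hw)
    have hau : a ≠ v := hum a ((hiffz a).mpr (Or.inr (Or.inl rfl)))
    have hbu : b ≠ v := hum b ((hiffz b).mpr (Or.inr (Or.inr rfl)))
    have hzu' : z ≠ v := hum z (rel_refl z)
    rcases hvm with rfl | rfl | rfl
    · simp [hza, hzb, hau, hbu, hzu', Ne.symm hza, Ne.symm hzb, hzv, hzu]
    · simp [hza, hab, hau, hbu, hzu', Ne.symm hab, hzv, hzu]
    · simp [hzb, hab, hau, hbu, hzu', hzv, hzu]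
  · -- neither
    have humv : ∀ w, Rel G z w → w ≠ v := fun w hw he => hzv (he ▸ hw)
    have humu : ∀ w, Rel G z w → w ≠ u := fun w hw he => hzu (he ▸ hw)
    have r1 := (hiffz a).mpr (Or.inr (Or.inl rfl))
    have r2 := (hiffz b).mpr (Or.inr (Or.inr rfl))
    have r0 := rel_refl (G := G) z
    simp [humv a r1, humv b r2, humv z r0, humu a r1, humu b r2, humu z r0, hzv, hzu]

lemma sum_qq_zero (x : (Quot (Ext G)) → ZMod 2) :
    ∑ v : V, x (Quot.mk (Ext G) v) = 0 := by
  rw [← Finset.sum_fiberwise Finset.univ (fun v => Quot.mk (Ext G) v)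
    (fun v => x (Quot.mk (Ext G) v))]
  rw [Finset.sum_eq_zero]
  intro q _
  obtain ⟨v, rfl⟩ := Quot.exists_rep q
  obtain ⟨c, hc, hsum⟩ := ext_sum h3ec hclaw hcubic hnotK4 v
  rw [Finset.sum_filter, hsum (fun w => x (Quot.mk (Ext G) w))]
  have : Quot.mk (Ext G) c = Quot.mk (Ext G) v := by
    rw [qq_mk_eq h3ec hclaw hcubic hnotK4]
    exact Or.inr (ext_symm hc)
  rw [this]
  exact CharTwo.add_self_eq_zero _

lemma single_pair_mem (v w : V) :
    (Pi.single (Quot.mk (Rel G) v) 1 + Pi.single (Quot.mk (Rel G) w) 1 :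
      (Quot (Rel G)) → ZMod 2) ∈ LinearMap.range (phi G) := by
  classical
  have hself : ∀ (m : (Quot (Rel G)) → ZMod 2), m + m = 0 := by
    intro m; funext t; exact CharTwo.add_self_eq_zero _
  obtain ⟨p⟩ := (conn h3ec).preconnected v w
  induction p with
  | nil =>
    rw [hself]
    exact Submodule.zero_mem _
  | @cons v u w hadj p ih =>
    have hstep : (Pi.single (Quot.mk (Rel G) v) 1 + Pi.single (Quot.mk (Rel G) u) 1 :
        (Quot (Rel G)) → ZMod 2) ∈ LinearMap.range (phi G) := by
      rcases adj_cases hadj with hr | he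
      · have : Quot.mk (Rel G) v = Quot.mk (Rel G) u :=
          (tq_mk_eq h3ec hclaw hcubic hnotK4).mpr hr
        rw [this, hself]
        exact Submodule.zero_mem _
      · exact ⟨_, phi_single h3ec hclaw hcubic hnotK4 he⟩
    have key : (Pi.single (Quot.mk (Rel G) v) 1 + Pi.single (Quot.mk (Rel G) w) 1 :
        (Quot (Rel G)) → ZMod 2) =
        (Pi.single (Quot.mk (Rel G) v) 1 + Pi.single (Quot.mk (Rel G) u) 1) +
        (Pi.single (Quot.mk (Rel G) u) 1 + Pi.single (Quot.mk (Rel G) w) 1) := by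
      have h2 : (Pi.single (Quot.mk (Rel G) u) 1 + Pi.single (Quot.mk (Rel G) u) 1 :
          (Quot (Rel G)) → ZMod 2) = 0 := hself _
      calc (Pi.single (Quot.mk (Rel G) v) 1 + Pi.single (Quot.mk (Rel G) w) 1 :
          (Quot (Rel G)) → ZMod 2)
          = Pi.single (Quot.mk (Rel G) v) 1 +
            ((Pi.single (Quot.mk (Rel G) u) 1 + Pi.single (Quot.mk (Rel G) u) 1) +
              Pi.single (Quot.mk (Rel G) w) 1) := by rw [h2]; abel
        _ = _ := by abel
    rw [key]
    exact Submodule.add_mem _ hstep ih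

lemma range_phi : LinearMap.range (phi G) = LinearMap.ker (sumF G) := by
  apply le_antisymm
  · rintro y ⟨x, rfl⟩
    show sumF G (phi G x) = 0
    show ∑ t, phi G x t = 0
    have : ∀ t, phi G x t =
        ∑ v : V, if Quot.mk (Rel G) v = t then x (Quot.mk (Ext G) v) else 0 :=
      fun t => phi_apply G x t
    rw [Finset.sum_congr rfl (fun t _ => this t), Finset.sum_comm]
    have : ∀ v : V, (∑ t, if Quot.mk (Rel G) v = t then x (Quot.mk (Ext G) v) else 0) =
        x (Quot.mk (Ext G) v) := by
      intro v
      rw [Finset.sum_ite_eq]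
      simp
    rw [Finset.sum_congr rfl (fun v _ => this v)]
    exact sum_qq_zero h3ec hclaw hcubic hnotK4 x
  · intro y hy
    have hy0 : ∑ t, y t = 0 := hy
    have hne : Nonempty V := (conn h3ec).nonempty
    obtain ⟨v₀⟩ := hne
    set t₀ := Quot.mk (Rel G) v₀ with ht₀
    have hdecomp : y = ∑ t, y t • (Pi.single t 1 + Pi.single t₀ 1) := by
      have h1 : ∀ t, y t • (Pi.single t 1 + Pi.single t₀ 1 : (Quot (Rel G)) → ZMod 2) =
          Pi.single (M := fun _ => ZMod 2) t (y t) +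
            y t • Pi.single (M := fun _ => ZMod 2) t₀ 1 := by
        intro t
        rw [smul_add]
        congr 1
        funext t'
        simp only [Pi.smul_apply, Pi.single_apply, smul_eq_mul]
        split <;> simp
      rw [Finset.sum_congr rfl (fun t _ => h1 t), Finset.sum_add_distrib,
        Finset.univ_sum_single, ← Finset.sum_smul, hy0, zero_smul, add_zero]
    rw [hdecomp]
    apply Submodule.sum_mem
    intro t _
    apply Submodule.smul_mem
    obtain ⟨z, rfl⟩ := Quot.exists_rep t
    exact single_pair_mem h3ec hclaw hcubic hnotK4 z v₀

lemma sumF_surjective : Function.Surjective (sumF G) := by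
  classical
  intro c
  have hne : Nonempty V := (conn h3ec).nonempty
  obtain ⟨v₀⟩ := hne
  refine ⟨Pi.single (Quot.mk (Rel G) v₀) c, ?_⟩
  show ∑ t, Pi.single (Quot.mk (Rel G) v₀) c t = c
  simp [Pi.single_apply]

lemma finrank_ker_phi :
    Module.finrank (ZMod 2) (LinearMap.ker (phi G)) = Fintype.card V / 6 + 1 := by
  classical
  have hT : Fintype.card V = 3 * Nat.card (Quot (Rel G)) := card_tq h3ec hclaw hcubic hnotK4
  have hQ : Fintype.card V = 2 * Nat.card (Quot (Ext G)) := card_qq h3ec hclaw hcubic hnotK4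
  have hrn1 := LinearMap.finrank_range_add_finrank_ker (phi G)
  have hrn2 := LinearMap.finrank_range_add_finrank_ker (sumF G)
  have hrange2 : LinearMap.range (sumF G) = ⊤ :=
    LinearMap.range_eq_top.mpr (sumF_surjective h3ec hclaw hcubic hnotK4)
  have hfr2 : Module.finrank (ZMod 2) (LinearMap.range (sumF G)) = 1 := by
    rw [hrange2, finrank_top, Module.finrank_self]
  have hdom1 : Module.finrank (ZMod 2) ((Quot (Ext G)) → ZMod 2) =
      Fintype.card (Quot (Ext G)) := Module.finrank_pi (ZMod 2)
  have hdom2 : Module.finrank (ZMod 2) ((Quot (Rel G)) → ZMod 2) =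
      Fintype.card (Quot (Rel G)) := Module.finrank_pi (ZMod 2)
  rw [range_phi h3ec hclaw hcubic hnotK4] at hrn1
  rw [hfr2, hdom2] at hrn2
  rw [hdom1] at hrn1
  have hc1 : Nat.card (Quot (Rel G)) = Fintype.card (Quot (Rel G)) := Nat.card_eq_fintype_card
  have hc2 : Nat.card (Quot (Ext G)) = Fintype.card (Quot (Ext G)) := Nat.card_eq_fintype_card
  omega

end WithHyps3


section WithHyps4

variable (h3ec : ThreeEdgeConnected G) (hclaw : ClawFree G)
    (hcubic : ∀ v : V, G.degree v = 3)
    (hnotK4 : ¬ Nonempty (G ≃g completeGraph (Fin 4)))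

include h3ec hclaw hcubic hnotK4

open scoped Classical in
lemma card_pm :
    Nat.card {M : G.Subgraph // M.IsPerfectMatching} =
      Nat.card {x : (Quot (Ext G)) → ZMod 2 // phi G x = fun _ => 1} := by
  classical
  choose f hf hfu using ext_partner h3ec hclaw hcubic hnotK4
  have hfadj : ∀ v, G.Adj v (f v) := fun v => (hf v).1
  have hfnr : ∀ v, ¬ Rel G v (f v) := fun v => (hf v).2
  have z2 : ∀ c : ZMod 2, c = 0 ∨ c = 1 := by decide
  have z01 : (0 : ZMod 2) ≠ 1 := by decide
  set g : G.Subgraph → V → ZMod 2 := fun M v => if M.Adj v (f v) then 1 else 0 with hg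
  have gresp : ∀ M : G.Subgraph, ∀ v w, Ext G v w → g M v = g M w := by
    intro M v w he
    have h1 : w = f v := hfu v w he
    have h2 : v = f w := hfu w v (ext_symm he)
    subst h1
    simp only [hg]
    rw [← h2]
    by_cases h : M.Adj v (f v)
    · rw [if_pos h, if_pos h.symm]
    · rw [if_neg h, if_neg (fun hh => h hh.symm)]
  -- the parity of every triangle under the external matching indicator is odd
  have parity : ∀ M : G.Subgraph, M.IsPerfectMatching →
      phi G (Quot.lift (g M) (gresp M)) = fun _ => 1 := by
    intro M hM
    have uniq : ∀ u w w', M.Adj u w → M.Adj u w' → w = w' :=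
      fun u w w' h1 h2 => (hM.1 (hM.2 u)).unique h1 h2
    have hpart : ∀ u, ∃ w, M.Adj u w := fun u => (hM.1 (hM.2 u)).exists
    have internal0 : ∀ u w, Rel G u w → M.Adj u w → g M u = 0 := by
      intro u w hr hadj
      have hn : ¬ M.Adj u (f u) := by
        intro hcon
        exact hfnr u ((uniq u w (f u) hadj hcon) ▸ hr)
      simp only [hg]
      rw [if_neg hn]
    have external1 : ∀ u, M.Adj u (f u) → g M u = 1 := by
      intro u h
      simp only [hg]
      rw [if_pos h]
    have ext_match : ∀ u p q, u ≠ p → u ≠ q →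
        (∀ z, Rel G u z → z = u ∨ z = p ∨ z = q) →
        ¬ M.Adj u p → ¬ M.Adj u q → M.Adj u (f u) := by
      intro u p q hup huq hcov hnp hnq
      obtain ⟨w, hw⟩ := hpart u
      rcases adj_cases (M.adj_sub hw) with hr | he
      · rcases hcov w hr with rfl | rfl | rfl
        · exact absurd (M.adj_sub hw) (G.irrefl)
        · exact absurd hw hnp
        · exact absurd hw hnq
      · rwa [hfu u w he] at hw
    funext t
    obtain ⟨z, rfl⟩ := Quot.exists_rep t
    obtain ⟨a, b, hza, hzb, hab, eza, ezb, eab, hiffz, hsum⟩ :=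
      tri_sum h3ec hclaw hcubic hnotK4 z
    show phi G _ (Quot.mk _ z) = 1
    rw [phi_apply]
    have hs := hsum (fun w => (Quot.lift (g M) (gresp M)) (Quot.mk (Ext G) w))
    beta_reduce at hs
    rw [hs]
    show g M z + g M a + g M b = 1
    have rza : Rel G z a := (hiffz a).mpr (Or.inr (Or.inl rfl))
    have rzb : Rel G z b := (hiffz b).mpr (Or.inr (Or.inr rfl))
    have rab : Rel G a b := rel_trans h3ec hclaw hcubic hnotK4 (rel_symm rza) rzb
    have cova : ∀ w, Rel G a w → w = a ∨ w = z ∨ w = b := by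
      intro w hw
      rcases (hiffz w).mp (rel_trans h3ec hclaw hcubic hnotK4 rza hw) with rfl | rfl | rfl <;>
        tauto
    have covb : ∀ w, Rel G b w → w = b ∨ w = z ∨ w = a := by
      intro w hw
      rcases (hiffz w).mp (rel_trans h3ec hclaw hcubic hnotK4 rzb hw) with rfl | rfl | rfl <;>
        tauto
    have covz : ∀ w, Rel G z w → w = z ∨ w = a ∨ w = b := fun w hw => (hiffz w).mp hw
    by_cases h1 : M.Adj z a <;> by_cases h2 : M.Adj z b <;> by_cases h3 : M.Adj a b
    · exact absurd (uniq z a b h1 h2) hab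
    · exact absurd (uniq z a b h1 h2) hab
    · exact absurd (uniq a z b h1.symm h3) hzb
    · -- only edge z-a
      rw [internal0 z a rza h1, internal0 a z (rel_symm rza) h1.symm,
        external1 b (ext_match b z a (Ne.symm hzb) (Ne.symm hab) covb
          (fun h => h2 h.symm) (fun h => h3 h.symm))]
      decide
    · exact absurd (uniq b z a h2.symm h3.symm) hza
    · -- only edge z-b
      rw [internal0 z b rzb h2, internal0 b z (rel_symm rzb) h2.symm,
        external1 a (ext_match a z b (Ne.symm hza) hab cova
          (fun h => h1 h.symm) h3)]
      decide
    · -- only edge a-b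
      rw [internal0 a b rab h3, internal0 b a (rel_symm rab) h3.symm,
        external1 z (ext_match z a b hza hzb covz h1 h2)]
      decide
    · -- no internal edge
      rw [external1 z (ext_match z a b hza hzb covz h1 h2),
        external1 a (ext_match a z b (Ne.symm hza) hab cova (fun h => h1 h.symm) h3),
        external1 b (ext_match b z a (Ne.symm hzb) (Ne.symm hab) covb
          (fun h => h2 h.symm) (fun h => h3 h.symm))]
      decide
  -- matchings with the same indicator are equal
  have key : ∀ (M M' : G.Subgraph), M.IsPerfectMatching → M'.IsPerfectMatching →
      (∀ v, g M v = g M' v) → ∀ u w, M.Adj u w → M'.Adj u w := by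
    intro M M' hM hM' hgg u w hadj
    have uniq : ∀ (N : G.Subgraph), N.IsPerfectMatching →
        ∀ u w w', N.Adj u w → N.Adj u w' → w = w' :=
      fun N hN u w w' h1 h2 => (hN.1 (hN.2 u)).unique h1 h2
    have hpart : ∀ (N : G.Subgraph), N.IsPerfectMatching → ∀ u, ∃ w, N.Adj u w :=
      fun N hN u => (hN.1 (hN.2 u)).exists
    have transfer1 : ∀ v, M.Adj v (f v) → M'.Adj v (f v) := by
      intro v h
      have hv := hgg v
      simp only [hg] at hv
      rw [if_pos h] at hv
      by_contra hc
      rw [if_neg hc] at hv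
      exact z01 hv.symm
    have transfer0 : ∀ v, ¬ M.Adj v (f v) → ¬ M'.Adj v (f v) := by
      intro v h hc
      have hv := hgg v
      simp only [hg] at hv
      rw [if_neg h, if_pos hc] at hv
      exact z01 hv
    rcases adj_cases (M.adj_sub hadj) with hr | he
    · -- internal edge of M
      have hneuw : u ≠ w := G.ne_of_adj (M.adj_sub hadj)
      have hu0 : ¬ M.Adj u (f u) := fun hc => hfnr u ((uniq M hM u w (f u) hadj hc) ▸ hr)
      have hw0 : ¬ M.Adj w (f w) := fun hc =>
        hfnr w ((uniq M hM w u (f w) hadj.symm hc) ▸ (rel_symm hr))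
      have hu0' : ¬ M'.Adj u (f u) := transfer0 u hu0
      obtain ⟨a, b, hua, hub, habd, eua, eub, eab2, hiffu, hsumu⟩ :=
        tri_sum h3ec hclaw hcubic hnotK4 u
      have rua : Rel G u a := (hiffu a).mpr (Or.inr (Or.inl rfl))
      have rub : Rel G u b := (hiffu b).mpr (Or.inr (Or.inr rfl))
      have main : ∀ p q, w = p → Rel G u p → Rel G u q → p ≠ q → u ≠ p → u ≠ q →
          (∀ z, Rel G u z → z = u ∨ z = p ∨ z = q) →
          (∀ z, Rel G q z → z = q ∨ z = u ∨ z = p) →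
          M'.Adj u w := by
        intro p q hwp hup huq hpq hup' huq' hcovu hcovq
        have hadj' : M.Adj u p := hwp ▸ hadj
        rw [hwp]
        -- q is externally matched in M
        have hq1 : M.Adj q (f q) := by
          obtain ⟨w', hw'⟩ := hpart M hM q
          rcases adj_cases (M.adj_sub hw') with hr' | he'
          · rcases hcovq w' hr' with h | h | h
            · rw [h] at hw'
              exact absurd (M.adj_sub hw') (G.irrefl)
            · rw [h] at hw'
              exact absurd (uniq M hM u p q hadj' hw'.symm) hpq
            · rw [h] at hw'
              exact absurd (uniq M hM p u q hadj'.symm hw'.symm) huq'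
          · rwa [hfu q w' he'] at hw'
        have hq1' : M'.Adj q (f q) := transfer1 q hq1
        obtain ⟨w', hw'⟩ := hpart M' hM' u
        rcases adj_cases (M'.adj_sub hw') with hr' | he'
        · rcases hcovu w' hr' with h | h | h
          · rw [h] at hw'
            exact absurd (M'.adj_sub hw') (G.irrefl)
          · rw [h] at hw'
            exact hw'
          · exfalso
            rw [h] at hw'
            have hqq : u = f q := uniq M' hM' q u (f q) hw'.symm hq1'
            exact hfnr q (hqq ▸ (rel_symm huq))
        · exfalso
          rw [hfu u w' he'] at hw'
          exact hu0' hw'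
      have hwab : w = a ∨ w = b := by
        rcases (hiffu w).mp hr with rfl | h | h
        · exact absurd rfl hneuw
        · exact Or.inl h
        · exact Or.inr h
      have covua : ∀ z, Rel G u z → z = u ∨ z = a ∨ z = b := fun z hz => (hiffu z).mp hz
      have covb' : ∀ z, Rel G b z → z = b ∨ z = u ∨ z = a := by
        intro z hz
        rcases (hiffu z).mp (rel_trans h3ec hclaw hcubic hnotK4 rub hz) with rfl | rfl | rfl <;>
          tauto
      have cova' : ∀ z, Rel G a z → z = a ∨ z = u ∨ z = b := by
        intro z hz
        rcases (hiffu z).mp (rel_trans h3ec hclaw hcubic hnotK4 rua hz) with rfl | rfl | rfl <;>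
          tauto
      rcases hwab with rfl | rfl
      · exact main w b rfl rua rub habd hua hub covua covb'
      · exact main w a rfl rub rua (Ne.symm habd) hub hua
          (fun z hz => by rcases covua z hz with h | h | h <;> tauto) cova'
    · -- external edge of M
      rw [hfu u w he] at hadj ⊢
      exact transfer1 u hadj
  refine Nat.card_eq_of_bijective
    (fun M => ⟨Quot.lift (g M.1) (gresp M.1), parity M.1 M.2⟩) ⟨?_, ?_⟩
  · -- injective
    intro M1 M2 hMM
    simp only [Subtype.mk.injEq] at hMM
    have hgg : ∀ v, g M1.1 v = g M2.1 v := fun v => congrFun hMM (Quot.mk (Ext G) v)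
    apply Subtype.ext
    apply SimpleGraph.Subgraph.ext
    · rw [Set.eq_univ_of_forall M1.2.2, Set.eq_univ_of_forall M2.2.2]
    · ext u w
      exact ⟨key M1.1 M2.1 M1.2 M2.2 hgg u w,
        key M2.1 M1.1 M2.2 M1.2 (fun v => (hgg v).symm) u w⟩
  · -- surjective
    rintro ⟨x, hx⟩
    -- parity of x on each triangle
    have xparity : ∀ z a b : V, (∀ w, Rel G z w ↔ (w = z ∨ w = a ∨ w = b)) →
        (∀ {M : Type} [AddCommMonoid M] (g' : V → M),
          (∑ w : V, if Quot.mk (Rel G) w = Quot.mk (Rel G) z then g' w else 0) =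
            g' z + g' a + g' b) →
        x (Quot.mk (Ext G) z) + x (Quot.mk (Ext G) a) + x (Quot.mk (Ext G) b) = 1 := by
      intro z a b hiffz hsum
      have := congrFun hx (Quot.mk (Rel G) z)
      rw [phi_apply] at this
      have hs := hsum (fun w => x (Quot.mk (Ext G) w))
      beta_reduce at hs
      rw [hs] at this
      exact this
    let M : G.Subgraph :=
      { verts := Set.univ
        Adj := fun u w => G.Adj u w ∧ ((Ext G u w ∧ x (Quot.mk (Ext G) u) = 1) ∨
          (Rel G u w ∧ x (Quot.mk (Ext G) u) = 0 ∧ x (Quot.mk (Ext G) w) = 0))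
        adj_sub := fun h => h.1
        edge_vert := fun _ => Set.mem_univ _
        symm := by
          constructor
          intro u w h
          refine ⟨h.1.symm, ?_⟩
          rcases h.2 with ⟨he, h1⟩ | ⟨hr, h1, h2⟩
          · refine Or.inl ⟨ext_symm he, ?_⟩
            have : Quot.mk (Ext G) w = Quot.mk (Ext G) u :=
              (qq_mk_eq h3ec hclaw hcubic hnotK4).mpr (Or.inr (ext_symm he))
            rw [this]
            exact h1
          · exact Or.inr ⟨rel_symm hr, h2, h1⟩ }
    have hMadj : ∀ u w, M.Adj u w ↔ (G.Adj u w ∧ ((Ext G u w ∧ x (Quot.mk (Ext G) u) = 1) ∨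
        (Rel G u w ∧ x (Quot.mk (Ext G) u) = 0 ∧ x (Quot.mk (Ext G) w) = 0))) :=
      fun u w => Iff.rfl
    have hMpm : M.IsPerfectMatching := by
      constructor
      · intro v _
        rcases z2 (x (Quot.mk (Ext G) v)) with hx0 | hx1
        · -- internally matched
          obtain ⟨a, b, hva, hvb, hab, eva, evb, eab, hiffv, hsumv⟩ :=
            tri_sum h3ec hclaw hcubic hnotK4 v
          have rva : Rel G v a := (hiffv a).mpr (Or.inr (Or.inl rfl))
          have rvb : Rel G v b := (hiffv b).mpr (Or.inr (Or.inr rfl))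
          have hpar := xparity v a b hiffv hsumv
          rw [hx0, zero_add] at hpar
          rcases z2 (x (Quot.mk (Ext G) a)) with ha0 | ha1
          · have hb1 : x (Quot.mk (Ext G) b) = 1 := by rwa [ha0, zero_add] at hpar
            refine ⟨a, ⟨eva, Or.inr ⟨rva, hx0, ha0⟩⟩, ?_⟩
            intro w' hw'
            rcases hw'.2 with ⟨he, h1⟩ | ⟨hr, _, hw0⟩
            · exact absurd (hx0 ▸ h1) (by decide)
            · rcases (hiffv w').mp hr with rfl | rfl | rfl
              · exact absurd hw'.1 (G.irrefl)
              · rfl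
              · exact absurd (hw0 ▸ hb1.symm) (by decide)
          · have hb0 : x (Quot.mk (Ext G) b) = 0 := by
              rcases z2 (x (Quot.mk (Ext G) b)) with h | h
              · exact h
              · rw [ha1, h] at hpar
                exact absurd hpar (by decide)
            refine ⟨b, ⟨evb, Or.inr ⟨rvb, hx0, hb0⟩⟩, ?_⟩
            intro w' hw'
            rcases hw'.2 with ⟨he, h1⟩ | ⟨hr, _, hw0⟩
            · exact absurd (hx0 ▸ h1) (by decide)
            · rcases (hiffv w').mp hr with rfl | rfl | rfl
              · exact absurd hw'.1 (G.irrefl)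
              · exact absurd (hw0 ▸ ha1.symm) (by decide)
              · rfl
        · -- externally matched
          refine ⟨f v, ⟨hfadj v, Or.inl ⟨hf v, hx1⟩⟩, ?_⟩
          intro w' hw'
          rcases hw'.2 with ⟨he, _⟩ | ⟨hr, h0, _⟩
          · exact hfu v w' he
          · exact absurd (h0 ▸ hx1.symm) (by decide)
      · intro v
        exact Set.mem_univ _
    refine ⟨⟨M, hMpm⟩, ?_⟩
    apply Subtype.ext
    funext q
    obtain ⟨v, rfl⟩ := Quot.exists_rep q
    show g M v = x (Quot.mk (Ext G) v)
    simp only [hg]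
    rcases z2 (x (Quot.mk (Ext G) v)) with hx0 | hx1
    · have hc : ¬ M.Adj v (f v) := by
        intro hc
        rcases hc.2 with ⟨_, h1⟩ | ⟨hr, _, _⟩
        · exact absurd (hx0.symm.trans h1) (by decide)
        · exact hfnr v hr
      rw [if_neg hc]
      exact hx0.symm
    · rw [if_pos ⟨hfadj v, Or.inl ⟨hf v, hx1⟩⟩]
      exact hx1.symm

lemma sol_card :
    Nat.card {x : (Quot (Ext G)) → ZMod 2 // phi G x = fun _ => 1} =
      2 ^ (Fintype.card V / 6 + 1) := by
  classical
  have hone : phi G (fun _ => (1 : ZMod 2)) = fun _ => 1 := by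
    funext t
    obtain ⟨z, rfl⟩ := Quot.exists_rep t
    obtain ⟨a, b, _, _, _, _, _, _, _, hsum⟩ := tri_sum h3ec hclaw hcubic hnotK4 z
    rw [phi_apply]
    have hs := hsum (fun _ => (1 : ZMod 2))
    rw [hs]
    decide
  have hker : ∀ y : (Quot (Ext G)) → ZMod 2, phi G y = 0 ↔ y ∈ LinearMap.ker (phi G) :=
    fun y => (LinearMap.mem_ker).symm
  have e : {x : (Quot (Ext G)) → ZMod 2 // phi G x = fun _ => 1} ≃
      LinearMap.ker (phi G) := by
    refine
      { toFun := fun x => ⟨x.1 + (fun _ => 1), ?_⟩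
        invFun := fun y => ⟨y.1 + (fun _ => 1), ?_⟩
        left_inv := ?_
        right_inv := ?_ }
    · rw [LinearMap.mem_ker, map_add, x.2, hone]
      funext t
      show (1 : ZMod 2) + 1 = 0
      decide
    · rw [map_add, LinearMap.mem_ker.mp y.2, hone, zero_add]
    · intro x
      apply Subtype.ext
      funext t
      show x.1 t + 1 + 1 = x.1 t
      rw [add_assoc, CharTwo.add_self_eq_zero, add_zero]
    · intro y
      apply Subtype.ext
      funext t
      show y.1 t + 1 + 1 = y.1 t
      rw [add_assoc, CharTwo.add_self_eq_zero, add_zero]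
  rw [Nat.card_congr e]
  haveI : Fintype (LinearMap.ker (phi G)) := Fintype.ofFinite _
  rw [Nat.card_eq_fintype_card, Module.card_eq_pow_finrank (K := ZMod 2), ZMod.card,
    finrank_ker_phi h3ec hclaw hcubic hnotK4]

end WithHyps4

end CFC

/-- Every 3-edge-connected claw-free cubic graph on `n` vertices other than `K₄`
has exactly `2 ^ (n / 6 + 1)` perfect matchings. -/
theorem threeEdgeConnected_clawfree_cubic_count_perfect_matchings
    {V : Type*} [Fintype V] (G : SimpleGraph V) [DecidableRel G.Adj]
    (h3ec : ThreeEdgeConnected G)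
    (hclaw : ClawFree G) (hcubic : ∀ v : V, G.degree v = 3)
    (hnotK4 : ¬ Nonempty (G ≃g SimpleGraph.completeGraph (Fin 4))) :
    ({M : G.Subgraph | M.IsPerfectMatching}.ncard : ℝ) =
      (2 : ℝ) ^ ((Fintype.card V : ℝ) / 6 + 1) := by
  classical
  have h1 : ({M : G.Subgraph | M.IsPerfectMatching}).ncard =
      2 ^ (Fintype.card V / 6 + 1) := by
    rw [← Nat.card_coe_set_eq]
    have e1 : Nat.card ↥{M : G.Subgraph | M.IsPerfectMatching} =
        Nat.card {M : G.Subgraph // M.IsPerfectMatching} := rfl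
    rw [e1, CFC.card_pm h3ec hclaw hcubic hnotK4, CFC.sol_card h3ec hclaw hcubic hnotK4]
  rw [h1]
  have hT := CFC.card_tq h3ec hclaw hcubic hnotK4
  have hQ := CFC.card_qq h3ec hclaw hcubic hnotK4
  have h6 : 6 ∣ Fintype.card V := by omega
  obtain ⟨k, hk⟩ := h6
  rw [hk]
  have hdiv : (6 * k) / 6 = k := by omega
  rw [hdiv]
  have hexp : ((6 * k : ℕ) : ℝ) / 6 + 1 = ((k + 1 : ℕ) : ℝ) := by push_cast; ring
  rw [hexp, Real.rpow_natCast]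
  push_cast
  ring
end
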